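/- arXiv:2311.02075 — 11 statements merged into one kernel-verified Lean document; each statement's English description precedes it below -/
import Mathlib

section
/- For any monotone hungry valuation function v on [0,1] and any integer n ≥ 1, there exists a unique tuple of cuts 0 = x₀ ≤ x₁ ≤ ⋯ ≤ xₙ = 1 such that all n pieces have equal value, i.e., v(x_{j−1}, x_j) = v(x_{k−1}, x_k) for all j, k ∈ {1,…,n} (the equipartition of the cake into n equal parts according to v). -/
/-!
Fix a piece value `t ≥ 0` and cut greedily from the left: the next cut after `a` is the unique
`b ∈ [a, 1]` with `v a b = min t (v a 1)` (unique because `v a` is strictly increasing). This cut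
depends continuously on `(a, t)`, since its graph is closed and it takes values in the compact
`[0, 1]`. Along `t ∈ [0, v 0 1]` the quantity `v (x_{n-1}) 1 - t` goes from `≥ 0` to `≤ 0`, so the
intermediate value theorem yields a `t` for which the last piece `[x_{n-1}, 1]` also has value `t`.

For uniqueness, if two equipartitions have piece values `s ≤ t`, an induction along the cuts
shows that the first lies pointwise below the second; if `s < t`, the last cut of the first is
then strictly below `1`. Hence `s = t` and the two partitions coincide.
-/

open Set

/-- A valuation function on the cake `[0,1]`. -/
def IsValuation (v : ℝ → ℝ → ℝ) : Prop :=
  ContinuousOn (fun p : ℝ × ℝ => v p.1 p.2) (Icc 0 1 ×ˢ Icc 0 1) ∧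
  (∀ a ∈ Icc (0:ℝ) 1, ∀ b ∈ Icc (0:ℝ) 1, v a b ∈ Icc (0:ℝ) 1) ∧
  (∀ a ∈ Icc (0:ℝ) 1, ∀ b ∈ Icc (0:ℝ) 1, b ≤ a → v a b = 0)

/-- Monotonicity of a valuation. -/
def MonotoneVal (v : ℝ → ℝ → ℝ) : Prop :=
  ∀ a' a b b' : ℝ, 0 ≤ a' → a' ≤ a → a ≤ b → b ≤ b' → b' ≤ 1 → v a b ≤ v a' b'

/-- Hungriness: monotone, and strictly monotone under strict inclusion of intervals. -/
def HungryVal (v : ℝ → ℝ → ℝ) : Prop :=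
  MonotoneVal v ∧
  ∀ a' a b b' : ℝ, 0 ≤ a' → a' ≤ a → a ≤ b → b ≤ b' → b' ≤ 1 →
    (a, b) ≠ (a', b') → v a b < v a' b'

open Filter Topology

/-- Closed graph theorem for maps into a compact set. -/
theorem continuousOn_of_isClosed_of_mapsTo_isCompact {X Y : Type*} [TopologicalSpace X]
    [TopologicalSpace Y] {f : X → Y} {s : Set X} {K : Set Y} {C : Set (X × Y)}
    (hK : IsCompact K) (hf : MapsTo f s K) (hC : IsClosed C) (hfC : ∀ x ∈ s, (x, f x) ∈ C)
    (huniq : ∀ x ∈ s, ∀ y ∈ K, (x, y) ∈ C → y = f x) : ContinuousOn f s := by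
  intro x hx
  refine hK.tendsto_nhds_of_unique_mapClusterPt (eventually_mem_nhdsWithin.mono hf)
    fun y hy hcl => huniq x hx y hy (hC.mem_of_mapClusterPt (f := fun x' => (x', f x'))
      (b := 𝓝[s] x) ?_ (eventually_mem_nhdsWithin.mono hfC))
  rw [((𝓝 x).basis_sets.prod_nhds (𝓝 y).basis_sets).mapClusterPt_iff_frequently]
  rintro ⟨U, V⟩ ⟨hU, hV⟩
  exact ((mapClusterPt_iff_frequently.1 hcl V hV).and_eventually
    (mem_nhdsWithin_of_mem_nhds hU)).mono fun _ h => ⟨h.2, h.1⟩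

variable {v : ℝ → ℝ → ℝ} {a b t : ℝ}

namespace IsValuation

theorem nonneg (hval : IsValuation v) (ha : a ∈ Icc (0 : ℝ) 1) (hb : b ∈ Icc (0 : ℝ) 1) :
    0 ≤ v a b :=
  (hval.2.1 a ha b hb).1

theorem continuousOn_comp (hval : IsValuation v) {X : Type*} [TopologicalSpace X] {s : Set X}
    {f g : X → ℝ} (hf : ContinuousOn f s) (hg : ContinuousOn g s) (hfs : MapsTo f s (Icc 0 1))
    (hgs : MapsTo g s (Icc 0 1)) : ContinuousOn (fun x => v (f x) (g x)) s :=
  hval.1.comp (hf.prodMk hg) fun _ hx => ⟨hfs hx, hgs hx⟩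

end IsValuation

theorem MonotoneVal.right_lt_of_val_lt (hm : MonotoneVal v) {a' b' : ℝ} (ha : 0 ≤ a)
    (haa' : a ≤ a') (hab' : a' ≤ b') (hb : b ≤ 1) (hv : v a b < v a' b') : b < b' := by
  by_contra! h
  exact (hm a a' b' b ha haa' hab' h hb).not_gt hv

namespace HungryVal

theorem strictMonoOn_right (hh : HungryVal v) (ha : 0 ≤ a) : StrictMonoOn (v a) (Icc a 1) :=
  fun b hb b' hb' hlt => hh.2 a a b b' ha le_rfl hb.1 hlt.le hb'.2 (by simp [hlt.ne])

theorem right_le_of_val_le (hh : HungryVal v) {a' b' : ℝ} (ha : 0 ≤ a) (haa' : a ≤ a')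
    (hab' : a' ≤ b') (hb : b ≤ 1) (hv : v a b ≤ v a' b') : b ≤ b' := by
  by_contra! h
  exact (hh.2 a a' b' b ha haa' hab' h.le hb (by simp [h.ne])).not_ge hv

end HungryVal

/-- When the rest `[a, 1]` of the cake is worth less than `t`, the cut is `1`. -/
noncomputable def nextCut (v : ℝ → ℝ → ℝ) (a t : ℝ) : ℝ :=
  Classical.epsilon fun b => b ∈ Icc a 1 ∧ v a b = min t (v a 1)

theorem IsValuation.exists_cut (hval : IsValuation v) (ha : a ∈ Icc (0 : ℝ) 1) (ht : 0 ≤ t) :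
    ∃ b, b ∈ Icc a 1 ∧ v a b = min t (v a 1) := by
  have hcont : ContinuousOn (v a) (Icc a 1) :=
    hval.continuousOn_comp continuousOn_const continuousOn_id (fun _ _ => ha)
      fun _ hb => ⟨ha.1.trans hb.1, hb.2⟩
  have hI1 : (1 : ℝ) ∈ Icc (0 : ℝ) 1 := ⟨zero_le_one, le_rfl⟩
  exact intermediate_value_Icc ha.2 hcont
    ⟨by rw [hval.2.2 a ha a ha le_rfl]; exact le_min ht (hval.nonneg ha hI1), min_le_right _ _⟩

theorem IsValuation.nextCut_spec (hval : IsValuation v) (ha : a ∈ Icc (0 : ℝ) 1) (ht : 0 ≤ t) :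
    nextCut v a t ∈ Icc a 1 ∧ v a (nextCut v a t) = min t (v a 1) :=
  Classical.epsilon_spec (hval.exists_cut ha ht)

theorem HungryVal.eq_nextCut (hh : HungryVal v) (hval : IsValuation v) (ha : a ∈ Icc (0 : ℝ) 1)
    (ht : 0 ≤ t) (hb : b ∈ Icc a 1) (hvb : v a b = min t (v a 1)) : b = nextCut v a t :=
  have hspec := hval.nextCut_spec ha ht
  (hh.strictMonoOn_right ha.1).injOn hb hspec.1 (hvb.trans hspec.2.symm)

theorem continuousOn_nextCut (hval : IsValuation v) (hh : HungryVal v) :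
    ContinuousOn (fun p : ℝ × ℝ => nextCut v p.1 p.2) (Icc 0 1 ×ˢ Ici 0) := by
  set D : Set ((ℝ × ℝ) × ℝ) := (Icc 0 1 ×ˢ Ici 0) ×ˢ Icc 0 1 ∩ {q | q.1.1 ≤ q.2}
  have hD : IsClosed D :=
    ((isClosed_Icc.prod isClosed_Ici).prod isClosed_Icc).inter
      (isClosed_le (by fun_prop) (by fun_prop))
  have hfst : MapsTo (fun q : (ℝ × ℝ) × ℝ => q.1.1) D (Icc 0 1) := fun q hq => hq.1.1.1
  have hcont : ContinuousOn (fun q : (ℝ × ℝ) × ℝ => v q.1.1 q.2 - min q.1.2 (v q.1.1 1)) D :=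
    (hval.continuousOn_comp (by fun_prop) (by fun_prop) hfst fun q hq => hq.1.2).sub
      (ContinuousOn.inf (by fun_prop) (hval.continuousOn_comp (by fun_prop)
        continuousOn_const hfst fun _ _ => ⟨zero_le_one, le_rfl⟩))
  refine continuousOn_of_isClosed_of_mapsTo_isCompact (isCompact_Icc (a := 0) (b := 1))
    (fun p hp => ?_) (hcont.preimage_isClosed_of_isClosed hD (isClosed_singleton (x := 0)))
    (fun p hp => ?_) fun p hp b hb hpb => ?_
  · have h := (hval.nextCut_spec hp.1 hp.2).1
    exact ⟨hp.1.1.trans h.1, h.2⟩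
  · have h := hval.nextCut_spec hp.1 hp.2
    exact ⟨⟨⟨hp, hp.1.1.trans h.1.1, h.1.2⟩, h.1.1⟩, sub_eq_zero.2 h.2⟩
  · exact hh.eq_nextCut hval hp.1 hp.2 ⟨hpb.1.2, hb.2⟩ (sub_eq_zero.1 hpb.2)

noncomputable def greedyCuts (v : ℝ → ℝ → ℝ) (t : ℝ) : ℕ → ℝ
  | 0 => 0
  | j + 1 => nextCut v (greedyCuts v t j) t

namespace IsValuation

theorem greedyCuts_mem (hval : IsValuation v) (ht : 0 ≤ t) (j : ℕ) :
    greedyCuts v t j ∈ Icc (0 : ℝ) 1 := by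
  induction j with
  | zero => exact ⟨le_rfl, zero_le_one⟩
  | succ j ih =>
    have h := (hval.nextCut_spec ih ht).1
    exact ⟨ih.1.trans h.1, h.2⟩

theorem greedyCuts_le_succ (hval : IsValuation v) (ht : 0 ≤ t) (j : ℕ) :
    greedyCuts v t j ≤ greedyCuts v t (j + 1) :=
  (hval.nextCut_spec (hval.greedyCuts_mem ht j) ht).1.1

theorem val_greedyCuts (hval : IsValuation v) (ht : 0 ≤ t) (j : ℕ) :
    v (greedyCuts v t j) (greedyCuts v t (j + 1)) = min t (v (greedyCuts v t j) 1) :=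
  (hval.nextCut_spec (hval.greedyCuts_mem ht j) ht).2

theorem continuousOn_greedyCuts (hval : IsValuation v) (hh : HungryVal v) (j : ℕ) :
    ContinuousOn (fun t => greedyCuts v t j) (Ici 0) := by
  induction j with
  | zero => exact continuousOn_const
  | succ j ih =>
    exact (continuousOn_nextCut hval hh).comp (ih.prodMk continuousOn_id)
      fun t ht => ⟨hval.greedyCuts_mem ht j, ht⟩

end IsValuation

theorem exists_val_greedyCuts_eq (hval : IsValuation v) (hh : HungryVal v) (m : ℕ) :
    ∃ t, 0 ≤ t ∧ v (greedyCuts v t m) 1 = t := by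
  have hI1 : (1 : ℝ) ∈ Icc (0 : ℝ) 1 := ⟨zero_le_one, le_rfl⟩
  have hv01 : 0 ≤ v 0 1 := hval.nonneg ⟨le_rfl, zero_le_one⟩ hI1
  have hcont : ContinuousOn (fun t => v (greedyCuts v t m) 1 - t) (Icc 0 (v 0 1)) :=
    ((hval.continuousOn_comp ((hval.continuousOn_greedyCuts hh m).mono Icc_subset_Ici_self)
      continuousOn_const (fun t ht => hval.greedyCuts_mem ht.1 m) fun _ _ => hI1)).sub
      continuousOn_id
  have hlow : v (greedyCuts v (v 0 1) m) 1 - v 0 1 ≤ 0 := by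
    have hx := hval.greedyCuts_mem hv01 m
    linarith [hh.1 0 _ 1 1 le_rfl hx.1 hx.2 le_rfl le_rfl]
  have hhigh : 0 ≤ v (greedyCuts v 0 m) 1 - 0 := by
    simpa using hval.nonneg (hval.greedyCuts_mem le_rfl m) hI1
  obtain ⟨t, ht, hzero⟩ := intermediate_value_Icc' hv01 hcont ⟨hlow, hhigh⟩
  exact ⟨t, ht.1, sub_eq_zero.1 hzero⟩

structure IsEquipartition (v : ℝ → ℝ → ℝ) {n : ℕ} (x : Fin (n + 1) → ℝ) (t : ℝ) : Prop where
  zero : x 0 = 0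
  last : x (Fin.last n) = 1
  le_succ : ∀ j : Fin n, x j.castSucc ≤ x j.succ
  val : ∀ j : Fin n, v (x j.castSucc) (x j.succ) = t

theorem isEquipartition_greedyCuts (hval : IsValuation v) (hh : HungryVal v) {m : ℕ}
    (ht : 0 ≤ t) (hfix : v (greedyCuts v t m) 1 = t) :
    IsEquipartition v (fun j : Fin (m + 2) => greedyCuts v t j) t := by
  have hmem := hval.greedyCuts_mem ht
  have hmono : Monotone (greedyCuts v t) := monotone_nat_of_le_succ (hval.greedyCuts_le_succ ht)
  refine ⟨rfl, ?_, fun j => hval.greedyCuts_le_succ ht j, fun j => ?_⟩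
  · exact (hh.eq_nextCut hval (hmem m) ht ⟨(hmem m).2, le_rfl⟩ (by rw [hfix, min_self])).symm
  · have hle : v (greedyCuts v t m) 1 ≤ v (greedyCuts v t j) 1 :=
      hh.1 _ _ 1 1 (hmem j).1 (hmono (Fin.is_le j)) (hmem m).2 le_rfl le_rfl
    rw [hfix] at hle
    exact (hval.val_greedyCuts ht j).trans (min_eq_left hle)

namespace IsEquipartition

variable {n : ℕ} {x y : Fin (n + 1) → ℝ} {s : ℝ}

theorem mem_Icc (hx : IsEquipartition v x t) (i : Fin (n + 1)) : x i ∈ Icc (0 : ℝ) 1 := by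
  have hmono : Monotone x := Fin.monotone_iff_le_succ.2 hx.le_succ
  exact ⟨hx.zero ▸ hmono (Fin.zero_le i), hx.last ▸ hmono (Fin.le_last i)⟩

theorem le_of_val_le (hh : HungryVal v) (hx : IsEquipartition v x s)
    (hy : IsEquipartition v y t) (hst : s ≤ t) : x ≤ y := by
  intro i
  induction i using Fin.induction with
  | zero => rw [hx.zero, hy.zero]
  | succ j ih =>
    exact hh.right_le_of_val_le (hx.mem_Icc _).1 ih (hy.le_succ j) (hx.mem_Icc _).2
      (by rw [hx.val, hy.val]; exact hst)

theorem ne_zero (hx : IsEquipartition v x t) : n ≠ 0 := by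
  rintro rfl
  simpa [hx.zero] using hx.last

theorem not_val_lt (hh : HungryVal v) (hx : IsEquipartition v x s)
    (hy : IsEquipartition v y t) : ¬ s < t := by
  intro hst
  obtain ⟨m, rfl⟩ := Nat.exists_eq_succ_of_ne_zero hx.ne_zero
  have hlast : x (Fin.last m).succ < y (Fin.last m).succ :=
    hh.1.right_lt_of_val_lt (hx.mem_Icc _).1 (hx.le_of_val_le hh hy hst.le _)
      (hy.le_succ (Fin.last m)) (hx.mem_Icc _).2 (by rw [hx.val, hy.val]; exact hst)
  simp only [Fin.succ_last, hx.last, hy.last, lt_irrefl] at hlast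

theorem eq (hh : HungryVal v) (hx : IsEquipartition v x s) (hy : IsEquipartition v y t) :
    x = y :=
  have hst : s = t :=
    le_antisymm (not_lt.1 (hy.not_val_lt hh hx)) (not_lt.1 (hx.not_val_lt hh hy))
  le_antisymm (hx.le_of_val_le hh hy hst.le) (hy.le_of_val_le hh hx hst.ge)

end IsEquipartition

/-- for any monotone hungry valuation and any `n ≥ 1` there is a unique
equipartition of the cake into `n` equal parts. -/
theorem existsUnique_equipartition (v : ℝ → ℝ → ℝ) (hval : IsValuation v)
    (hhungry : HungryVal v) (n : ℕ) (hn : 1 ≤ n) :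
    ∃! x : Fin (n + 1) → ℝ,
      x 0 = 0 ∧ x (Fin.last n) = 1 ∧ (∀ j : Fin n, x j.castSucc ≤ x j.succ) ∧
      ∀ j k : Fin n, v (x j.castSucc) (x j.succ) = v (x k.castSucc) (x k.succ) := by
  obtain ⟨m, rfl⟩ : ∃ m, n = m + 1 := ⟨n - 1, by omega⟩
  obtain ⟨t, ht, hfix⟩ := exists_val_greedyCuts_eq hval hhungry m
  have hx := isEquipartition_greedyCuts hval hhungry ht hfix
  refine ⟨fun j => greedyCuts v t j,
    ⟨hx.zero, hx.last, hx.le_succ, fun j k => (hx.val j).trans (hx.val k).symm⟩, ?_⟩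
  rintro y ⟨hy0, hy1, hyle, hyval⟩
  exact (IsEquipartition.mk hy0 hy1 hyle fun j => hyval j 0).eq hhungry hx
end

section
/- Let v₁, …, vₙ be valuation functions on the cake [0,1]. If for every ε > 0 there exists a connected ε-envy-free allocation for the n agents, then there exists a connected envy-free allocation. -/
open Set

/-- There is a connected `ε`-envy-free allocation for the `n` agents with valuations `v`:
cuts `0 = c 0 ≤ c 1 ≤ ⋯ ≤ c n = 1`, pieces `P j = [c j, c (j+1)]`, and a bijection `π`
assigning pieces to agents such that no agent envies another by more than `ε`. -/
def ExistsEFAlloc (n : ℕ) (v : Fin n → ℝ → ℝ → ℝ) (ε : ℝ) : Prop :=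
  ∃ c : Fin (n + 1) → ℝ, c 0 = 0 ∧ c (Fin.last n) = 1 ∧
    (∀ j : Fin n, c j.castSucc ≤ c j.succ) ∧
    ∃ π : Equiv.Perm (Fin n),
      ∀ i j : Fin n,
        v i (c j.castSucc) (c j.succ) - ε ≤ v i (c (π i).castSucc) (c (π i).succ)

/-!
The `ε`-envy-free allocations with a fixed assignment `π` of pieces to agents form a closed subset
of the compact space of cut vectors, shrinking as `ε` decreases, and their intersection over
`ε > 0` is the set of envy-free allocations with assignment `π`. Since there are only finitely many
assignments, one of them works for arbitrarily small, hence for all, `ε > 0`; Cantor's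
intersection theorem then yields an envy-free allocation.
-/

open Filter Topology

theorem exists_forall_pos_of_forall_pos_exists {β : Type*} [Finite β] {p : β → ℝ → Prop}
    (hp : ∀ b, Monotone (p b)) (h : ∀ ε > 0, ∃ b, p b ε) : ∃ b, ∀ ε > 0, p b ε := by
  have hfreq : ∃ᶠ ε in 𝓝[>] (0 : ℝ), ∃ b, p b ε :=
    (eventually_nhdsWithin_of_forall (s := Ioi 0) h).frequently
  obtain ⟨b, hb⟩ := frequently_exists.1 hfreq
  refine ⟨b, fun ε hε => ?_⟩
  obtain ⟨ε', hpε', hε'⟩ := (hb.and_eventually (Ioo_mem_nhdsGT hε)).exists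
  exact hp b hε'.2.le hpε'

theorem nonempty_iInter₂_pos_of_monotone {X : Type*} [TopologicalSpace X] [T2Space X]
    {A : ℝ → Set X} (hA : Monotone A) (hc : ∀ ε > 0, IsCompact (A ε))
    (hne : ∀ ε > 0, (A ε).Nonempty) : (⋂ ε > 0, A ε).Nonempty := by
  have hpos (k : ℕ) : (0 : ℝ) < 1 / (k + 1) := Nat.one_div_pos_of_nat
  obtain ⟨x, hx⟩ := IsCompact.nonempty_iInter_of_sequence_nonempty_isCompact_isClosed
    (fun k : ℕ => A (1 / (k + 1)))
    (fun k => hA (Nat.one_div_le_one_div k.le_succ))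
    (fun k => hne _ (hpos k)) (hc _ (hpos 0)) (fun k => (hc _ (hpos k)).isClosed)
  refine ⟨x, mem_iInter₂.2 fun ε hε => ?_⟩
  obtain ⟨k, hk⟩ := exists_nat_one_div_lt hε
  exact hA hk.le (mem_iInter.1 hx k)

def cutVectors (n : ℕ) : Set (Fin (n + 1) → ℝ) :=
  {c | c 0 = 0 ∧ c (Fin.last n) = 1 ∧ ∀ j : Fin n, c j.castSucc ≤ c j.succ}

theorem cutVectors_subset_pi (n : ℕ) : cutVectors n ⊆ univ.pi fun _ => Icc 0 1 := by
  rintro c ⟨h0, hlast, hle⟩ j -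
  have hmono : Monotone c := Fin.monotone_iff_le_succ.2 hle
  exact ⟨h0 ▸ hmono (Fin.zero_le j), hlast ▸ hmono (Fin.le_last j)⟩

theorem isClosed_cutVectors (n : ℕ) : IsClosed (cutVectors n) := by
  simp only [cutVectors, ofPred_and, ofPred_forall]
  exact (isClosed_eq (continuous_apply 0) continuous_const).inter <|
    (isClosed_eq (continuous_apply (Fin.last n)) continuous_const).inter <|
      isClosed_iInter fun j : Fin n =>
        isClosed_le (continuous_apply j.castSucc) (continuous_apply j.succ)

theorem isCompact_cutVectors (n : ℕ) : IsCompact (cutVectors n) :=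
  (isCompact_univ_pi fun _ => isCompact_Icc).of_isClosed_subset (isClosed_cutVectors n)
    (cutVectors_subset_pi n)

theorem ContinuousOn.comp_eval_pi_Icc {ι : Type*} {w : ℝ → ℝ → ℝ}
    (hw : ContinuousOn (Function.uncurry w) (Icc 0 1 ×ˢ Icc 0 1)) (a b : ι) :
    ContinuousOn (fun c : ι → ℝ => w (c a) (c b)) (univ.pi fun _ => Icc 0 1) :=
  hw.comp (f := fun c : ι → ℝ => (c a, c b)) (by fun_prop)
    fun _ hc => ⟨mem_univ_pi.1 hc a, mem_univ_pi.1 hc b⟩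

section EnvyFreeCuts

variable {n : ℕ} {v : Fin n → ℝ → ℝ → ℝ}

def envyFreeCuts (v : Fin n → ℝ → ℝ → ℝ) (ε : ℝ) (π : Equiv.Perm (Fin n)) :
    Set (Fin (n + 1) → ℝ) :=
  {c ∈ cutVectors n | ∀ i j : Fin n,
    v i (c j.castSucc) (c j.succ) - ε ≤ v i (c (π i).castSucc) (c (π i).succ)}

theorem existsEFAlloc_iff {ε : ℝ} :
    ExistsEFAlloc n v ε ↔ ∃ π, (envyFreeCuts v ε π).Nonempty :=
  ⟨fun ⟨c, h0, h1, h2, π, hπ⟩ => ⟨π, c, ⟨h0, h1, h2⟩, hπ⟩,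
    fun ⟨π, c, ⟨h0, h1, h2⟩, hπ⟩ => ⟨c, h0, h1, h2, π, hπ⟩⟩

theorem envyFreeCuts_mono (π : Equiv.Perm (Fin n)) : Monotone fun ε => envyFreeCuts v ε π :=
  fun _ _ hεε' _ ⟨hc, henvy⟩ => ⟨hc, fun i j => (sub_le_sub_left hεε' _).trans (henvy i j)⟩

theorem iInter₂_envyFreeCuts_pos_subset (π : Equiv.Perm (Fin n)) :
    ⋂ ε > 0, envyFreeCuts v ε π ⊆ envyFreeCuts v 0 π := by
  intro c hc
  have hcε : ∀ ε > 0, c ∈ envyFreeCuts v ε π := mem_iInter₂.1 hc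
  refine ⟨(hcε 1 one_pos).1, fun i j => ?_⟩
  rw [sub_zero]
  exact le_of_forall_sub_le fun ε hε => (hcε ε hε).2 i j

theorem isCompact_envyFreeCuts
    (hv : ∀ i, ContinuousOn (Function.uncurry (v i)) (Icc 0 1 ×ˢ Icc 0 1))
    (ε : ℝ) (π : Equiv.Perm (Fin n)) : IsCompact (envyFreeCuts v ε π) := by
  have hcont (i : Fin n) (a b : Fin (n + 1)) :
      ContinuousOn (fun c : Fin (n + 1) → ℝ => v i (c a) (c b)) (cutVectors n) :=
    ((hv i).comp_eval_pi_Icc a b).mono (cutVectors_subset_pi n)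
  have hclosed : IsClosed (envyFreeCuts v ε π) := by
    refine isClosed_of_closure_subset fun c hc => ?_
    have hK : closure (envyFreeCuts v ε π) ⊆ cutVectors n :=
      closure_minimal (fun _ hc' => hc'.1) (isClosed_cutVectors n)
    exact ⟨hK hc, fun i j => le_on_closure (fun _ hc' => hc'.2 i j)
      (((hcont i _ _).sub continuousOn_const).mono hK) ((hcont i _ _).mono hK) hc⟩
  exact (isCompact_cutVectors n).of_isClosed_subset hclosed fun _ hc => hc.1

end EnvyFreeCuts

/-- if for every `ε > 0` a connected `ε`-envy-free allocation exists, then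
a connected envy-free allocation exists. -/
theorem exists_envyFree_of_forall_eps (n : ℕ) (v : Fin n → ℝ → ℝ → ℝ)
    (hval : ∀ i, IsValuation (v i))
    (h : ∀ ε : ℝ, 0 < ε → ExistsEFAlloc n v ε) :
    ExistsEFAlloc n v 0 := by
  obtain ⟨π, hπ⟩ := exists_forall_pos_of_forall_pos_exists
    (p := fun π ε => (envyFreeCuts v ε π).Nonempty)
    (fun π _ _ hεε' hne => hne.mono (envyFreeCuts_mono π hεε'))
    (fun ε hε => existsEFAlloc_iff.1 (h ε hε))
  obtain ⟨c, hc⟩ := nonempty_iInter₂_pos_of_monotone (envyFreeCuts_mono π)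
    (fun ε _ => isCompact_envyFreeCuts (fun i => (hval i).1) ε π) hπ
  exact existsEFAlloc_iff.2 ⟨π, c, iInter₂_envyFreeCuts_pos_subset π hc⟩
end

section
/- Let v₁, …, vₙ be monotone valuation functions and let ε ∈ (0,1). Define v'_i(a,b) := (1−ε)·v_i(a,b) + ε·(b−a) for a ≤ b (and v'_i(a,b) = 0 for b ≤ a). Then each v'_i is a monotone hungry valuation function, and every envy-free connected allocation with respect to v'_1,…,v'_n is (ε/(1−ε))-envy-free with respect to v₁,…,vₙ. -/
open Set

/-- The perturbed valuation `v'(a,b) = (1-ε)·v(a,b) + ε·(b-a)` for `a ≤ b`, and `0` otherwise. -/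
noncomputable def perturb (ε : ℝ) (v : ℝ → ℝ → ℝ) : ℝ → ℝ → ℝ :=
  fun a b => if a ≤ b then (1 - ε) * v a b + ε * (b - a) else 0

/-- the perturbed valuations are monotone hungry valuation functions, and
every envy-free connected allocation for them is `(ε/(1-ε))`-envy-free for the originals. -/
theorem perturb_hungry_and_envyFree_transfer (n : ℕ) (v : Fin n → ℝ → ℝ → ℝ)
    (hval : ∀ i, IsValuation (v i)) (hmono : ∀ i, MonotoneVal (v i))
    (ε : ℝ) (hε0 : 0 < ε) (hε1 : ε < 1) :
    (∀ i, IsValuation (perturb ε (v i)) ∧ MonotoneVal (perturb ε (v i)) ∧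
      HungryVal (perturb ε (v i))) ∧
    (∀ c : Fin (n + 1) → ℝ, ∀ π : Equiv.Perm (Fin n),
      c 0 = 0 → c (Fin.last n) = 1 → (∀ j : Fin n, c j.castSucc ≤ c j.succ) →
      (∀ i j : Fin n, perturb ε (v i) (c j.castSucc) (c j.succ) ≤
        perturb ε (v i) (c (π i).castSucc) (c (π i).succ)) →
      ∀ i j : Fin n,
        v i (c j.castSucc) (c j.succ) - ε / (1 - ε) ≤
          v i (c (π i).castSucc) (c (π i).succ)) := by
  have hε1' : (0:ℝ) < 1 - ε := by linarith
  have hmonoP : ∀ i, MonotoneVal (perturb ε (v i)) := by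
    intro i a' a b b' h0 h1 h2 h3 h4
    rw [perturb, perturb]
    rw [if_pos h2, if_pos (h1.trans (h2.trans h3))]
    have hv := hmono i a' a b b' h0 h1 h2 h3 h4
    nlinarith
  constructor
  · intro i
    obtain ⟨hc, hrange, hzero⟩ := hval i
    refine ⟨⟨?_, ?_, ?_⟩, hmonoP i, hmonoP i, ?_⟩
    · have heq : EqOn (fun p : ℝ × ℝ => perturb ε (v i) p.1 p.2)
          (fun p : ℝ × ℝ => (1 - ε) * v i p.1 p.2 + ε * max (p.2 - p.1) 0)
          (Icc 0 1 ×ˢ Icc 0 1) := by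
        rintro ⟨a, b⟩ ⟨ha, hb⟩
        simp only [perturb]
        by_cases h : a ≤ b
        · rw [if_pos h, max_eq_left (by linarith)]
        · push_neg at h
          rw [if_neg (not_le.2 h), hzero a ha b hb h.le,
            max_eq_right (by linarith : b - a ≤ 0)]
          ring
      refine ContinuousOn.congr ?_ heq
      exact (continuousOn_const.mul hc).add
        (((continuous_snd.sub continuous_fst).max continuous_const).continuousOn.const_smul ε)
    · intro a ha b hb
      rw [perturb]
      split_ifs with h
      · have h1 := hrange a ha b hb
        obtain ⟨ha0, ha1⟩ := ha; obtain ⟨hb0, hb1⟩ := hb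
        obtain ⟨hv0, hv1⟩ := h1
        constructor <;> nlinarith
      · exact ⟨le_refl 0, zero_le_one⟩
    · intro a ha b hb hba
      rw [perturb]
      split_ifs with h
      · have hab : a = b := le_antisymm h hba
        subst hab
        rw [hzero a ha a ha le_rfl]; ring
      · rfl
    · intro a' a b b' h0 h1 h2 h3 h4 hne
      rw [perturb, perturb, if_pos h2, if_pos (h1.trans (h2.trans h3))]
      have hv := hmono i a' a b b' h0 h1 h2 h3 h4
      have hlen : b - a < b' - a' := by
        rcases lt_or_eq_of_le h1 with h | h
        · linarith
        rcases lt_or_eq_of_le h3 with h' | h'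
        · linarith
        · exact absurd (Prod.ext h.symm h') hne
      nlinarith
  · intro c π h0 h1 hcm hef i j
    have hmc : Monotone c := Fin.monotone_iff_le_succ.2 hcm
    have hrange : ∀ k, c k ∈ Icc (0:ℝ) 1 := by
      intro k
      constructor
      · rw [← h0]; exact hmc (Fin.zero_le k)
      · rw [← h1]; exact hmc (Fin.le_last k)
    have key := hef i j
    rw [perturb, perturb, if_pos (hcm j), if_pos (hcm (π i))] at key
    have hL2 : c (π i).succ - c (π i).castSucc ≤ 1 := by
      have := (hrange (π i).succ).2
      have := (hrange (π i).castSucc).1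
      linarith
    have hL1 : 0 ≤ c j.succ - c j.castSucc := by linarith [hcm j]
    have hd : ε / (1 - ε) * (1 - ε) = ε := div_mul_cancel₀ _ (ne_of_gt hε1')
    nlinarith
end

section
/- Let v₁, …, vₙ be monotone 1-Lipschitz valuation functions and let 0 < ε ≤ 1/2. Define v'_i(a,b) := v_i(a,b)/2 + ε·(b−a) for a ≤ b (and v'_i(a,b) = 0 for b ≤ a). Then each v'_i is a monotone, 1-Lipschitz, ε-strongly-hungry valuation function, and every 5ε-envy-free connected allocation with respect to v'_1,…,v'_n is 12ε-envy-free with respect to v₁,…,vₙ. -/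
open Set

/-- `L`-Lipschitz continuity of a valuation on `[0,1]²`. -/
def LipschitzVal (L : ℝ) (v : ℝ → ℝ → ℝ) : Prop :=
  ∀ a b a' b' : ℝ, a ∈ Icc (0:ℝ) 1 → b ∈ Icc (0:ℝ) 1 → a' ∈ Icc (0:ℝ) 1 → b' ∈ Icc (0:ℝ) 1 →
    |v a b - v a' b'| ≤ L * (|a - a'| + |b - b'|)

/-- `ε`-strong-hungriness: extending an interval by length `t` increases its value
by at least `ε·t`. -/
def StronglyHungry (ε : ℝ) (v : ℝ → ℝ → ℝ) : Prop :=
  ∀ a' a b b' : ℝ, 0 ≤ a' → a' ≤ a → a ≤ b → b ≤ b' → b' ≤ 1 →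
    v a b + ε * (b' - b) + ε * (a - a') ≤ v a' b'

/-- The perturbed valuation `v'(a,b) = v(a,b)/2 + ε·(b-a)` for `a ≤ b`, and `0` otherwise. -/
noncomputable def perturbHalf (ε : ℝ) (v : ℝ → ℝ → ℝ) : ℝ → ℝ → ℝ :=
  fun a b => if a ≤ b then v a b / 2 + ε * (b - a) else 0

section Aux
variable {ε : ℝ} {w : ℝ → ℝ → ℝ}

lemma perturbHalf_isValuation (hε0 : 0 < ε) (hε1 : ε ≤ 1 / 2)
    (hval : IsValuation w) : IsValuation (perturbHalf ε w) := by
  obtain ⟨hcont, hrange, hzero⟩ := hval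
  refine ⟨?_, ?_, ?_⟩
  · have hg : ContinuousOn (fun p : ℝ × ℝ => w p.1 p.2 / 2 + ε * max (p.2 - p.1) 0)
        (Icc 0 1 ×ˢ Icc 0 1) := by
      exact (hcont.div_const 2).add
        ((continuous_const.mul ((continuous_snd.sub continuous_fst).max continuous_const)).continuousOn)
    refine hg.congr ?_
    intro p hp
    simp only [mem_prod] at hp
    by_cases h : p.1 ≤ p.2
    · simp [perturbHalf, h, max_eq_left (by linarith : (0:ℝ) ≤ p.2 - p.1)]
    · simp [perturbHalf, h, max_eq_right (by linarith : p.2 - p.1 ≤ 0),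
        hzero p.1 hp.1 p.2 hp.2 (le_of_not_ge h)]
  · intro a ha b hb
    have hr := hrange a ha b hb
    by_cases h : a ≤ b
    · simp only [perturbHalf, if_pos h]
      constructor
      · nlinarith [hr.1]
      · nlinarith [hr.2, ha.1, hb.2]
    · simp [perturbHalf, h]
  · intro a ha b hb hba
    by_cases h : a ≤ b
    · have : a = b := le_antisymm h hba
      subst this
      simp [perturbHalf, hzero a ha a ha le_rfl]
    · simp [perturbHalf, h]

lemma perturbHalf_monotone (hε0 : 0 < ε) (hmono : MonotoneVal w) :
    MonotoneVal (perturbHalf ε w) := by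
  intro a' a b b' ha' h1 h2 h3 h4
  have hab : a ≤ b := h2
  have hab' : a' ≤ b' := by linarith
  simp only [perturbHalf, if_pos hab, if_pos hab']
  have := hmono a' a b b' ha' h1 h2 h3 h4
  nlinarith

lemma perturbHalf_lipschitz (hε0 : 0 < ε) (hε1 : ε ≤ 1 / 2)
    (hval : IsValuation w) (hlip : LipschitzVal 1 w) :
    LipschitzVal 1 (perturbHalf ε w) := by
  obtain ⟨-, hrange, hzero⟩ := hval
  intro a b a' b' ha hb ha' hb'
  have key : ∀ x y x' y' : ℝ, x ∈ Icc (0:ℝ) 1 → y ∈ Icc (0:ℝ) 1 → x' ∈ Icc (0:ℝ) 1 →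
      y' ∈ Icc (0:ℝ) 1 → x ≤ y → ¬ x' ≤ y' →
      |perturbHalf ε w x y - perturbHalf ε w x' y'| ≤ 1 * (|x - x'| + |y - y'|) := by
    intro x y x' y' hx hy hx' hy' hxy hxy'
    have h0 : w x' y' = 0 := hzero x' hx' y' hy' (le_of_not_ge hxy')
    have hw := hlip x y x' y' hx hy hx' hy'
    rw [h0, sub_zero] at hw
    have hwnn := (hrange x hx y hy).1
    simp only [perturbHalf, if_pos hxy, if_neg hxy', sub_zero]
    have habs1 : |x - x'| ≥ x' - x := by cases abs_cases (x - x') <;> linarith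
    have habs2 : |y - y'| ≥ y - y' := by cases abs_cases (y - y') <;> linarith
    have hwx : |w x y| = w x y := abs_of_nonneg hwnn
    rw [hwx] at hw
    rw [abs_of_nonneg (add_nonneg (by linarith) (mul_nonneg hε0.le (by linarith)) :
      (0:ℝ) ≤ w x y / 2 + ε * (y - x))]
    have : y - x ≤ |x - x'| + |y - y'| := by
      have : y' < x' := lt_of_not_ge hxy'
      linarith
    nlinarith [abs_nonneg (x - x'), abs_nonneg (y - y')]
  by_cases h1 : a ≤ b <;> by_cases h2 : a' ≤ b'
  · simp only [perturbHalf, if_pos h1, if_pos h2]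
    have hw := abs_le.1 (hlip a b a' b' ha hb ha' hb')
    have h3 : ε * (b - b') ≤ 1/2 * |b - b'| := by
      nlinarith [le_abs_self (b - b'), abs_nonneg (b - b')]
    have h4 : ε * (a' - a) ≤ 1/2 * |a - a'| := by
      nlinarith [neg_abs_le (a - a'), abs_nonneg (a - a')]
    have h5 : ε * (b' - b) ≤ 1/2 * |b - b'| := by
      nlinarith [neg_abs_le (b - b'), abs_nonneg (b - b')]
    have h6 : ε * (a - a') ≤ 1/2 * |a - a'| := by
      nlinarith [le_abs_self (a - a'), abs_nonneg (a - a')]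
    rw [abs_le]
    constructor
    · nlinarith [hw.1]
    · nlinarith [hw.2]
  · exact key a b a' b' ha hb ha' hb' h1 h2
  · rw [abs_sub_comm, abs_sub_comm a a', abs_sub_comm b b']
    exact key a' b' a b ha' hb' ha hb h2 h1
  · simp only [perturbHalf, if_neg h1, if_neg h2, sub_zero, abs_zero]
    positivity

lemma perturbHalf_stronglyHungry (hmono : MonotoneVal w) :
    StronglyHungry ε (perturbHalf ε w) := by
  intro a' a b b' ha' h1 h2 h3 h4
  have hab' : a' ≤ b' := by linarith
  simp only [perturbHalf, if_pos h2, if_pos hab']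
  have := hmono a' a b b' ha' h1 h2 h3 h4
  nlinarith

end Aux

/-- the perturbed valuations are monotone, 1-Lipschitz, `ε`-strongly-hungry
valuation functions, and every `5ε`-envy-free connected allocation for them is
`12ε`-envy-free for the originals. -/
theorem perturbHalf_props_and_envyFree_transfer (n : ℕ) (v : Fin n → ℝ → ℝ → ℝ)
    (hval : ∀ i, IsValuation (v i)) (hmono : ∀ i, MonotoneVal (v i))
    (hlip : ∀ i, LipschitzVal 1 (v i))
    (ε : ℝ) (hε0 : 0 < ε) (hε1 : ε ≤ 1 / 2) :
    (∀ i, IsValuation (perturbHalf ε (v i)) ∧ MonotoneVal (perturbHalf ε (v i)) ∧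
      LipschitzVal 1 (perturbHalf ε (v i)) ∧ StronglyHungry ε (perturbHalf ε (v i))) ∧
    (∀ c : Fin (n + 1) → ℝ, ∀ π : Equiv.Perm (Fin n),
      c 0 = 0 → c (Fin.last n) = 1 → (∀ j : Fin n, c j.castSucc ≤ c j.succ) →
      (∀ i j : Fin n, perturbHalf ε (v i) (c j.castSucc) (c j.succ) - 5 * ε ≤
        perturbHalf ε (v i) (c (π i).castSucc) (c (π i).succ)) →
      ∀ i j : Fin n,
        v i (c j.castSucc) (c j.succ) - 12 * ε ≤
          v i (c (π i).castSucc) (c (π i).succ)) := by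
  constructor
  · intro i
    exact ⟨perturbHalf_isValuation hε0 hε1 (hval i), perturbHalf_monotone hε0 (hmono i),
      perturbHalf_lipschitz hε0 hε1 (hval i) (hlip i), perturbHalf_stronglyHungry (hmono i)⟩
  · intro c π hc0 hc1 hcm hef i j
    have hmonoc : Monotone c := by
      rw [Fin.monotone_iff_le_succ]
      intro k
      exact hcm k
    have hmem : ∀ k : Fin (n+1), c k ∈ Icc (0:ℝ) 1 := by
      intro k
      constructor
      · rw [← hc0]; exact hmonoc (Fin.zero_le k)
      · rw [← hc1]; exact hmonoc (Fin.le_last k)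
    have hef' := hef i j
    have hj := hcm j
    have hpi := hcm (π i)
    simp only [perturbHalf, if_pos hj, if_pos hpi] at hef'
    have hlen1 : c (π i).succ - c (π i).castSucc ≤ 1 := by
      have := (hmem (π i).succ).2
      have := (hmem (π i).castSucc).1
      linarith
    nlinarith
end

section
/- Let v₁ be a 1-Lipschitz, ε-strongly-hungry valuation function with 0 < ε ≤ 1. Let α₃ (resp. α₄) denote the common piece value of the unique equipartition of [0,1] into 3 (resp. 4) equal parts according to v₁. Then for every piece index k ∈ {1,2,3,4} and every α ∈ [α₄, α₃] there exists a unique division γ_k^A(α) = (ℓ(α), m(α), r(α)) such that v₁(P_t) = α for every piece index t ≠ k; moreover the map γ_k^A is Lipschitz with constant 6/ε³ on [α₄, α₃] with respect to the ℓ₁-norm: |ℓ(α) − ℓ(α')| + |m(α) − m(α')| + |r(α) − r(α')| ≤ (6/ε³)·|α − α'| for all α, α' ∈ [α₄, α₃]. -/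
open Set

/-- A division of the cake into four pieces by cuts `ℓ ≤ m ≤ r`. -/
def IsDiv (ℓ m r : ℝ) : Prop := 0 ≤ ℓ ∧ ℓ ≤ m ∧ m ≤ r ∧ r ≤ 1

/-- The values of the four pieces `[0,ℓ], [ℓ,m], [m,r], [r,1]` under valuation `v`. -/
def pieceVal (v : ℝ → ℝ → ℝ) (ℓ m r : ℝ) : Fin 4 → ℝ :=
  ![v 0 ℓ, v ℓ m, v m r, v r 1]

section helpers
variable {ε : ℝ} {v : ℝ → ℝ → ℝ}

lemma pieceVal0 {ℓ m r : ℝ} : pieceVal v ℓ m r 0 = v 0 ℓ := rfl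
lemma pieceVal1 {ℓ m r : ℝ} : pieceVal v ℓ m r 1 = v ℓ m := rfl
lemma pieceVal2 {ℓ m r : ℝ} : pieceVal v ℓ m r 2 = v m r := rfl
lemma pieceVal3 {ℓ m r : ℝ} : pieceVal v ℓ m r 3 = v r 1 := rfl

lemma chain3 (hε0 : 0 < ε) (hε1 : ε ≤ 1) {d1 d2 d3 D : ℝ} (hD : 0 ≤ D)
    (hd1 : 0 ≤ d1) (hd2 : 0 ≤ d2) (hd3 : 0 ≤ d3)
    (h1 : ε * d1 ≤ D) (h2 : ε * d2 ≤ D + d1) (h3 : ε * d3 ≤ D + d2) :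
    d1 + d2 + d3 ≤ 6 / ε ^ 3 * D := by
  rw [div_mul_eq_mul_div, le_div_iff₀ (by positivity)]
  have k1 : ε^2 * (ε*d1) ≤ ε^2 * D := mul_le_mul_of_nonneg_left h1 (by positivity)
  have k2 : ε^2 * (ε*d2) ≤ ε^2 * (D + d1) := mul_le_mul_of_nonneg_left h2 (by positivity)
  have k3 : ε^2 * (ε*d3) ≤ ε^2 * (D + d2) := mul_le_mul_of_nonneg_left h3 (by positivity)
  have k4 : ε * (ε * d1) ≤ ε * D := mul_le_mul_of_nonneg_left h1 hε0.le
  have k5 : ε * (ε * d2) ≤ ε * (D + d1) := mul_le_mul_of_nonneg_left h2 hε0.le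
  have hε2 : ε^2 ≤ 1 := by nlinarith
  have k6 : ε^2 * D ≤ D := by nlinarith [mul_nonneg (sub_nonneg.2 hε2) hD]
  have k7 : ε * D ≤ D := by nlinarith [mul_nonneg (sub_nonneg.2 hε1) hD]
  nlinarith [k1, k2, k3, k4, k5, k6, k7]

lemma solve_right (hval : IsValuation v)
    {a : ℝ} (ha0 : 0 ≤ a) (ha1 : a ≤ 1) {α : ℝ} (hα0 : 0 ≤ α) (hα1 : α ≤ v a 1) :
    ∃ b, a ≤ b ∧ b ≤ 1 ∧ v a b = α := by
  obtain ⟨hc, hr, hz⟩ := hval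
  have hcont : ContinuousOn (fun b => v a b) (Icc a 1) := by
    have h1 : ContinuousOn (fun b : ℝ => ((a, b) : ℝ × ℝ)) (Icc a 1) :=
      (continuous_const.prodMk continuous_id).continuousOn
    exact hc.comp h1 (fun b hb => ⟨⟨ha0, ha1⟩, ⟨ha0.trans hb.1, hb.2⟩⟩)
  have haa : v a a = 0 := hz a ⟨ha0, ha1⟩ a ⟨ha0, ha1⟩ le_rfl
  have hmem : α ∈ Icc (v a a) (v a 1) := ⟨by rw [haa]; exact hα0, hα1⟩
  obtain ⟨b, hb, hfb⟩ := intermediate_value_Icc ha1 hcont hmem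
  exact ⟨b, hb.1, hb.2, hfb⟩

lemma solve_left (hval : IsValuation v)
    {b : ℝ} (hb0 : 0 ≤ b) (hb1 : b ≤ 1) {α : ℝ} (hα0 : 0 ≤ α) (hα1 : α ≤ v 0 b) :
    ∃ a, 0 ≤ a ∧ a ≤ b ∧ v a b = α := by
  obtain ⟨hc, hr, hz⟩ := hval
  have hcont : ContinuousOn (fun a => v a b) (Icc 0 b) := by
    have h1 : ContinuousOn (fun a : ℝ => ((a, b) : ℝ × ℝ)) (Icc 0 b) :=
      (continuous_id.prodMk continuous_const).continuousOn
    exact hc.comp h1 (fun a ha => ⟨⟨ha.1, ha.2.trans hb1⟩, ⟨hb0, hb1⟩⟩)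
  have hbb : v b b = 0 := hz b ⟨hb0, hb1⟩ b ⟨hb0, hb1⟩ le_rfl
  have hmem : α ∈ Icc (v b b) (v 0 b) := ⟨by rw [hbb]; exact hα0, hα1⟩
  obtain ⟨a, ha, hfa⟩ := intermediate_value_Icc' hb0 hcont hmem
  exact ⟨a, ha.1, ha.2, hfa⟩

lemma cmp_right (hε0 : 0 < ε) (hlip : LipschitzVal 1 v) (hsh : StronglyHungry ε v)
    {a b a' b' α α' : ℝ} (h0 : 0 ≤ a) (hab : a ≤ b) (hb1 : b ≤ 1)
    (h0' : 0 ≤ a') (hab' : a' ≤ b') (hb1' : b' ≤ 1)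
    (hv : v a b = α) (hv' : v a' b' = α') :
    ε * |b - b'| ≤ |α - α'| + |a - a'| := by
  have ha1 : a ≤ 1 := hab.trans hb1
  have ha1' : a' ≤ 1 := hab'.trans hb1'
  have hb0 : 0 ≤ b := h0.trans hab
  have hb0' : 0 ≤ b' := h0'.trans hab'
  rcases le_total b b' with h | h
  · rw [abs_sub_comm, abs_of_nonneg (sub_nonneg.2 h)]
    have h1 := hsh a a b b' h0 le_rfl hab h hb1'
    have h2 := hlip a b' a' b' ⟨h0, ha1⟩ ⟨hb0', hb1'⟩ ⟨h0', ha1'⟩ ⟨hb0', hb1'⟩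
    simp only [sub_self, abs_zero, add_zero, one_mul] at h2
    have e1 : v a b' - v a' b' ≤ |a - a'| := (le_abs_self _).trans h2
    have e2 : α' - α ≤ |α - α'| := (le_abs_self _).trans (abs_sub_comm α' α).le
    have hz : ε * (a - a) = 0 := by ring
    rw [hv] at h1; rw [hv'] at e1
    linarith
  · rw [abs_of_nonneg (sub_nonneg.2 h)]
    have h1 := hsh a' a' b' b h0' le_rfl hab' h hb1
    have h2 := hlip a' b a b ⟨h0', ha1'⟩ ⟨hb0, hb1⟩ ⟨h0, ha1⟩ ⟨hb0, hb1⟩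
    simp only [sub_self, abs_zero, add_zero, one_mul] at h2
    have e1 : v a' b - v a b ≤ |a - a'| := by
      rw [abs_sub_comm a a']; exact (le_abs_self _).trans h2
    have e2 : α - α' ≤ |α - α'| := le_abs_self _
    have hz : ε * (a' - a') = 0 := by ring
    rw [hv'] at h1; rw [hv] at e1
    linarith

lemma cmp_left (hε0 : 0 < ε) (hlip : LipschitzVal 1 v) (hsh : StronglyHungry ε v)
    {a b a' b' α α' : ℝ} (h0 : 0 ≤ a) (hab : a ≤ b) (hb1 : b ≤ 1)
    (h0' : 0 ≤ a') (hab' : a' ≤ b') (hb1' : b' ≤ 1)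
    (hv : v a b = α) (hv' : v a' b' = α') :
    ε * |a - a'| ≤ |α - α'| + |b - b'| := by
  have ha1 : a ≤ 1 := hab.trans hb1
  have ha1' : a' ≤ 1 := hab'.trans hb1'
  have hb0 : 0 ≤ b := h0.trans hab
  have hb0' : 0 ≤ b' := h0'.trans hab'
  rcases le_total a a' with h | h
  · rw [abs_sub_comm, abs_of_nonneg (sub_nonneg.2 h)]
    have h1 := hsh a a' b' b' h0 h hab' le_rfl hb1'
    have h2 := hlip a b' a b ⟨h0, ha1⟩ ⟨hb0', hb1'⟩ ⟨h0, ha1⟩ ⟨hb0, hb1⟩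
    simp only [sub_self, abs_zero, zero_add, one_mul] at h2
    have e1 : v a b' - v a b ≤ |b - b'| := by
      rw [abs_sub_comm b b']; exact (le_abs_self _).trans h2
    have e2 : α - α' ≤ |α - α'| := le_abs_self _
    have hz : ε * (b' - b') = 0 := by ring
    rw [hv'] at h1; rw [hv] at e1
    linarith
  · rw [abs_of_nonneg (sub_nonneg.2 h)]
    have h1 := hsh a' a b b h0' h hab le_rfl hb1
    have h2 := hlip a' b a' b' ⟨h0', ha1'⟩ ⟨hb0, hb1⟩ ⟨h0', ha1'⟩ ⟨hb0', hb1'⟩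
    simp only [sub_self, abs_zero, zero_add, one_mul] at h2
    have e1 : v a' b - v a' b' ≤ |b - b'| := (le_abs_self _).trans h2
    have e2 : α' - α ≤ |α - α'| := (le_abs_self _).trans (abs_sub_comm α' α).le
    have hz : ε * (b - b) = 0 := by ring
    rw [hv] at h1; rw [hv'] at e1
    linarith

lemma abs3_eq {x1 x2 x3 y1 y2 y3 : ℝ}
    (h : |x1 - y1| + |x2 - y2| + |x3 - y3| ≤ 0) :
    x1 = y1 ∧ x2 = y2 ∧ x3 = y3 := by
  have a1 := abs_nonneg (x1 - y1)
  have a2 := abs_nonneg (x2 - y2)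
  have a3 := abs_nonneg (x3 - y3)
  have e1 : |x1 - y1| = 0 := le_antisymm (by linarith) a1
  have e2 : |x2 - y2| = 0 := le_antisymm (by linarith) a2
  have e3 : |x3 - y3| = 0 := le_antisymm (by linarith) a3
  rw [abs_eq_zero, sub_eq_zero] at e1 e2 e3
  exact ⟨e1, e2, e3⟩

lemma exist_div (hε0 : 0 < ε) (hval : IsValuation v) (hsh : StronglyHungry ε v)
    {α₃ a₃ b₃ : ℝ} (ha₃0 : 0 ≤ a₃) (hab₃ : a₃ ≤ b₃) (hb₃1 : b₃ ≤ 1)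
    (hv0a₃ : v 0 a₃ = α₃) (hva₃b₃ : v a₃ b₃ = α₃) (hvb₃1 : v b₃ 1 = α₃)
    (k : Fin 4) {α : ℝ} (hα0 : 0 ≤ α) (hα3 : α ≤ α₃) :
    ∃ p : ℝ × ℝ × ℝ, IsDiv p.1 p.2.1 p.2.2 ∧
      ∀ t, t ≠ k → pieceVal v p.1 p.2.1 p.2.2 t = α := by
  have hb₃0 : 0 ≤ b₃ := ha₃0.trans hab₃
  have hv01 : α₃ ≤ v 0 1 := by
    have h := hsh 0 b₃ 1 1 le_rfl hb₃0 hb₃1 le_rfl le_rfl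
    rw [hvb₃1] at h
    nlinarith [mul_nonneg hε0.le (sub_nonneg.2 hb₃0)]
  have haveL : ∃ ℓ m, 0 ≤ ℓ ∧ ℓ ≤ m ∧ ℓ ≤ a₃ ∧ m ≤ b₃ ∧ v 0 ℓ = α ∧ v ℓ m = α := by
    obtain ⟨ℓ, hℓ0, hℓ1, hvℓ⟩ := solve_right hval le_rfl zero_le_one hα0 (hα3.trans hv01)
    have hℓa₃ : ℓ ≤ a₃ := by
      by_contra hx
      push_neg at hx
      have h := hsh 0 0 a₃ ℓ le_rfl le_rfl ha₃0 hx.le hℓ1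
      rw [hv0a₃, hvℓ] at h
      nlinarith [mul_pos hε0 (sub_pos.2 hx)]
    have hvℓ1 : α ≤ v ℓ 1 := by
      have h := hsh ℓ a₃ b₃ 1 hℓ0 hℓa₃ hab₃ hb₃1 le_rfl
      rw [hva₃b₃] at h
      linarith [mul_nonneg hε0.le (sub_nonneg.2 hb₃1),
        mul_nonneg hε0.le (sub_nonneg.2 hℓa₃)]
    obtain ⟨m, hℓm, hm1, hvm⟩ := solve_right hval hℓ0 hℓ1 hα0 hvℓ1
    have hmb₃ : m ≤ b₃ := by
      by_contra hx
      push_neg at hx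
      have h := hsh ℓ a₃ b₃ m hℓ0 hℓa₃ hab₃ hx.le hm1
      rw [hva₃b₃, hvm] at h
      nlinarith [mul_pos hε0 (sub_pos.2 hx), mul_nonneg hε0.le (sub_nonneg.2 hℓa₃)]
    exact ⟨ℓ, m, hℓ0, hℓm, hℓa₃, hmb₃, hvℓ, hvm⟩
  have haveR : ∃ m r, m ≤ r ∧ r ≤ 1 ∧ a₃ ≤ m ∧ b₃ ≤ r ∧ v m r = α ∧ v r 1 = α := by
    obtain ⟨r, hr0, hr1, hvr⟩ := solve_left hval zero_le_one le_rfl hα0 (hα3.trans hv01)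
    have hb₃r : b₃ ≤ r := by
      by_contra hx
      push_neg at hx
      have h := hsh r b₃ 1 1 hr0 hx.le hb₃1 le_rfl le_rfl
      rw [hvb₃1, hvr] at h
      nlinarith [mul_pos hε0 (sub_pos.2 hx)]
    have hv0r : α ≤ v 0 r := by
      have h := hsh 0 a₃ b₃ r le_rfl ha₃0 hab₃ hb₃r hr1
      rw [hva₃b₃] at h
      linarith [mul_nonneg hε0.le (sub_nonneg.2 hb₃r),
        mul_nonneg hε0.le (sub_nonneg.2 ha₃0)]
    obtain ⟨m, hm0, hmr, hvm⟩ := solve_left hval hr0 hr1 hα0 hv0r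
    have ha₃m : a₃ ≤ m := by
      by_contra hx
      push_neg at hx
      have h := hsh m a₃ b₃ r hm0 hx.le hab₃ hb₃r hr1
      rw [hva₃b₃, hvm] at h
      nlinarith [mul_pos hε0 (sub_pos.2 hx), mul_nonneg hε0.le (sub_nonneg.2 hb₃r)]
    exact ⟨m, r, hmr, hr1, ha₃m, hb₃r, hvm, hvr⟩
  fin_cases k
  · -- k = 0
    obtain ⟨m, r, hmr, hr1, ha₃m, hb₃r, hvm, hvr⟩ := haveR
    have hm1 : m ≤ 1 := hmr.trans hr1
    have hv0m : α ≤ v 0 m := by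
      have h := hsh 0 0 a₃ m le_rfl le_rfl ha₃0 ha₃m hm1
      rw [hv0a₃] at h
      nlinarith [mul_nonneg hε0.le (sub_nonneg.2 ha₃m)]
    obtain ⟨ℓ, hℓ0, hℓm, hvℓ⟩ := solve_left hval (ha₃0.trans ha₃m) hm1 hα0 hv0m
    refine ⟨(ℓ, m, r), ⟨hℓ0, hℓm, hmr, hr1⟩, ?_⟩
    intro t ht
    fin_cases t
    · exact absurd rfl ht
    · exact hvℓ
    · exact hvm
    · exact hvr
  · -- k = 1
    obtain ⟨ℓ, m', hℓ0, _, hℓa₃, _, hvℓ, _⟩ := haveL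
    obtain ⟨m, r, hmr, hr1, ha₃m, hb₃r, hvm, hvr⟩ := haveR
    refine ⟨(ℓ, m, r), ⟨hℓ0, hℓa₃.trans ha₃m, hmr, hr1⟩, ?_⟩
    intro t ht
    fin_cases t
    · exact hvℓ
    · exact absurd rfl ht
    · exact hvm
    · exact hvr
  · -- k = 2
    obtain ⟨ℓ, m, hℓ0, hℓm, hℓa₃, hmb₃, hvℓ, hvm⟩ := haveL
    obtain ⟨m', r, _, hr1, _, hb₃r, _, hvr⟩ := haveR
    refine ⟨(ℓ, m, r), ⟨hℓ0, hℓm, hmb₃.trans hb₃r, hr1⟩, ?_⟩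
    intro t ht
    fin_cases t
    · exact hvℓ
    · exact hvm
    · exact absurd rfl ht
    · exact hvr
  · -- k = 3
    obtain ⟨ℓ, m, hℓ0, hℓm, hℓa₃, hmb₃, hvℓ, hvm⟩ := haveL
    have hm0 : 0 ≤ m := hℓ0.trans hℓm
    have hm1 : m ≤ 1 := hmb₃.trans hb₃1
    have hvm1 : α ≤ v m 1 := by
      have h := hsh m b₃ 1 1 hm0 hmb₃ hb₃1 le_rfl le_rfl
      rw [hvb₃1] at h
      nlinarith [mul_nonneg hε0.le (sub_nonneg.2 hmb₃)]
    obtain ⟨r, hmr, hr1, hvr⟩ := solve_right hval hm0 hm1 hα0 hvm1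
    refine ⟨(ℓ, m, r), ⟨hℓ0, hℓm, hmr, hr1⟩, ?_⟩
    intro t ht
    fin_cases t
    · exact hvℓ
    · exact hvm
    · exact hvr
    · exact absurd rfl ht
lemma uniq_div (hε0 : 0 < ε) (hε1 : ε ≤ 1) (hlip : LipschitzVal 1 v)
    (hsh : StronglyHungry ε v) (k : Fin 4) :
    ∀ (β β' ℓ m r ℓ' m' r' : ℝ), IsDiv ℓ m r →
      (∀ t, t ≠ k → pieceVal v ℓ m r t = β) → IsDiv ℓ' m' r' →
      (∀ t, t ≠ k → pieceVal v ℓ' m' r' t = β') →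
      |ℓ - ℓ'| + |m - m'| + |r - r'| ≤ 6 / ε ^ 3 * |β - β'| := by
  intro β β' ℓ m r ℓ' m' r' hd hp hd' hp'
  obtain ⟨hℓ0, hℓm, hmr, hr1⟩ := hd
  obtain ⟨hℓ0', hℓm', hmr', hr1'⟩ := hd'
  have hm1 : m ≤ 1 := hmr.trans hr1
  have hℓ1 : ℓ ≤ 1 := hℓm.trans hm1
  have hm0 : 0 ≤ m := hℓ0.trans hℓm
  have hr0 : 0 ≤ r := hm0.trans hmr
  have hm1' : m' ≤ 1 := hmr'.trans hr1'
  have hℓ1' : ℓ' ≤ 1 := hℓm'.trans hm1'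
  have hm0' : 0 ≤ m' := hℓ0'.trans hℓm'
  have hr0' : 0 ≤ r' := hm0'.trans hmr'
  have hD : (0:ℝ) ≤ |β - β'| := abs_nonneg _
  fin_cases k
  · -- k = 0 : pieces 1,2,3
    have e1 := hp 1 (by decide); have e2 := hp 2 (by decide); have e3 := hp 3 (by decide)
    have f1 := hp' 1 (by decide); have f2 := hp' 2 (by decide); have f3 := hp' 3 (by decide)
    rw [pieceVal1] at e1 f1; rw [pieceVal2] at e2 f2; rw [pieceVal3] at e3 f3
    have c3 := cmp_left hε0 hlip hsh hr0 hr1 le_rfl hr0' hr1' le_rfl e3 f3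
    simp only [sub_self, abs_zero, add_zero] at c3
    have c2 := cmp_left hε0 hlip hsh hm0 hmr hr1 hm0' hmr' hr1' e2 f2
    have c1 := cmp_left hε0 hlip hsh hℓ0 hℓm hm1 hℓ0' hℓm' hm1' e1 f1
    have := chain3 hε0 hε1 hD (abs_nonneg _) (abs_nonneg _) (abs_nonneg _) c3 c2 c1
    linarith
  · -- k = 1 : pieces 0,2,3
    have e0 := hp 0 (by decide); have e2 := hp 2 (by decide); have e3 := hp 3 (by decide)
    have f0 := hp' 0 (by decide); have f2 := hp' 2 (by decide); have f3 := hp' 3 (by decide)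
    rw [pieceVal0] at e0 f0; rw [pieceVal2] at e2 f2; rw [pieceVal3] at e3 f3
    have c0 := cmp_right hε0 hlip hsh le_rfl hℓ0 hℓ1 le_rfl hℓ0' hℓ1' e0 f0
    simp only [sub_self, abs_zero, add_zero] at c0
    have c3 := cmp_left hε0 hlip hsh hr0 hr1 le_rfl hr0' hr1' le_rfl e3 f3
    simp only [sub_self, abs_zero, add_zero] at c3
    have c2 := cmp_left hε0 hlip hsh hm0 hmr hr1 hm0' hmr' hr1' e2 f2
    have c0' : ε * |ℓ - ℓ'| ≤ |β - β'| + |m - m'| := by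
      linarith [abs_nonneg (m - m')]
    have := chain3 hε0 hε1 hD (abs_nonneg _) (abs_nonneg _) (abs_nonneg _) c3 c2 c0'
    linarith
  · -- k = 2 : pieces 0,1,3
    have e0 := hp 0 (by decide); have e1 := hp 1 (by decide); have e3 := hp 3 (by decide)
    have f0 := hp' 0 (by decide); have f1 := hp' 1 (by decide); have f3 := hp' 3 (by decide)
    rw [pieceVal0] at e0 f0; rw [pieceVal1] at e1 f1; rw [pieceVal3] at e3 f3
    have c0 := cmp_right hε0 hlip hsh le_rfl hℓ0 hℓ1 le_rfl hℓ0' hℓ1' e0 f0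
    simp only [sub_self, abs_zero, add_zero] at c0
    have c1 := cmp_right hε0 hlip hsh hℓ0 hℓm hm1 hℓ0' hℓm' hm1' e1 f1
    have c3 := cmp_left hε0 hlip hsh hr0 hr1 le_rfl hr0' hr1' le_rfl e3 f3
    simp only [sub_self, abs_zero, add_zero] at c3
    have c3' : ε * |r - r'| ≤ |β - β'| + |m - m'| := by
      linarith [abs_nonneg (m - m')]
    have := chain3 hε0 hε1 hD (abs_nonneg _) (abs_nonneg _) (abs_nonneg _) c0 c1 c3'
    linarith
  · -- k = 3 : pieces 0,1,2
    have e0 := hp 0 (by decide); have e1 := hp 1 (by decide); have e2 := hp 2 (by decide)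
    have f0 := hp' 0 (by decide); have f1 := hp' 1 (by decide); have f2 := hp' 2 (by decide)
    rw [pieceVal0] at e0 f0; rw [pieceVal1] at e1 f1; rw [pieceVal2] at e2 f2
    have c0 := cmp_right hε0 hlip hsh le_rfl hℓ0 hℓ1 le_rfl hℓ0' hℓ1' e0 f0
    simp only [sub_self, abs_zero, add_zero] at c0
    have c1 := cmp_right hε0 hlip hsh hℓ0 hℓm hm1 hℓ0' hℓm' hm1' e1 f1
    have c2 := cmp_right hε0 hlip hsh hm0 hmr hr1 hm0' hmr' hr1' e2 f2
    exact chain3 hε0 hε1 hD (abs_nonneg _) (abs_nonneg _) (abs_nonneg _) c0 c1 c2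
end helpers

/-- the trail `γ_k^A` is well-defined (existence and uniqueness of the
division where Agent 1 values every piece except `k` exactly `α`) on `[α₄, α₃]`, and it is
`6/ε³`-Lipschitz in the `ℓ₁`-norm. -/
theorem trailA_wellDefined_and_lipschitz (ε : ℝ) (hε0 : 0 < ε) (hε1 : ε ≤ 1)
    (v : ℝ → ℝ → ℝ) (hval : IsValuation v) (hlip : LipschitzVal 1 v)
    (hsh : StronglyHungry ε v)
    (α₃ α₄ : ℝ)
    (a₃ b₃ : ℝ) (h₃ : 0 ≤ a₃ ∧ a₃ ≤ b₃ ∧ b₃ ≤ 1 ∧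
      v 0 a₃ = α₃ ∧ v a₃ b₃ = α₃ ∧ v b₃ 1 = α₃)
    (l₄ m₄ r₄ : ℝ) (h₄ : IsDiv l₄ m₄ r₄ ∧
      v 0 l₄ = α₄ ∧ v l₄ m₄ = α₄ ∧ v m₄ r₄ = α₄ ∧ v r₄ 1 = α₄)
    (k : Fin 4) :
    ∃ γ : ℝ → ℝ × ℝ × ℝ,
      (∀ α ∈ Icc α₄ α₃, ∀ ℓ m r : ℝ,
        ((ℓ, m, r) = γ α ↔
          (IsDiv ℓ m r ∧ ∀ t, t ≠ k → pieceVal v ℓ m r t = α))) ∧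
      (∀ α ∈ Icc α₄ α₃, ∀ α' ∈ Icc α₄ α₃,
        |(γ α).1 - (γ α').1| + |(γ α).2.1 - (γ α').2.1| + |(γ α).2.2 - (γ α').2.2|
          ≤ 6 / ε ^ 3 * |α - α'|) := by
  obtain ⟨ha₃0, hab₃, hb₃1, hv0a₃, hva₃b₃, hvb₃1⟩ := h₃
  obtain ⟨⟨hl₄0, hlm₄, hmr₄, hr₄1⟩, hv0l₄, hvlm₄, hvmr₄, hvr₄1⟩ := h₄
  have hα₄0 : 0 ≤ α₄ := by
    have h := hval.2.1 0 ⟨le_rfl, zero_le_one⟩ l₄ ⟨hl₄0, hlm₄.trans (hmr₄.trans hr₄1)⟩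
    rw [hv0l₄] at h; exact h.1
  have exist : ∀ α ∈ Icc α₄ α₃, ∃ p : ℝ × ℝ × ℝ,
      IsDiv p.1 p.2.1 p.2.2 ∧ ∀ t, t ≠ k → pieceVal v p.1 p.2.1 p.2.2 t = α :=
    fun α hα => exist_div hε0 hval hsh ha₃0 hab₃ hb₃1 hv0a₃ hva₃b₃ hvb₃1 k
      (hα₄0.trans hα.1) hα.2
  have uniq := uniq_div (v := v) hε0 hε1 hlip hsh k
  classical
  refine ⟨fun α => if h : α ∈ Icc α₄ α₃ then (exist α h).choose else 0, ?_, ?_⟩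
  · intro α hmem ℓ m r
    have hspec := (exist α hmem).choose_spec
    simp only [dif_pos hmem]
    constructor
    · intro heq
      have h1 : ℓ = ((exist α hmem).choose).1 := by rw [← heq]
      have h2 : m = ((exist α hmem).choose).2.1 := by rw [← heq]
      have h3 : r = ((exist α hmem).choose).2.2 := by rw [← heq]
      rw [h1, h2, h3]
      exact hspec
    · rintro ⟨hdiv, hpieces⟩
      have hb := uniq α α ℓ m r _ _ _ hdiv hpieces hspec.1 hspec.2
      rw [sub_self, abs_zero, mul_zero] at hb
      obtain ⟨g1, g2, g3⟩ := abs3_eq hb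
      exact Prod.ext g1 (Prod.ext g2 g3)
  · intro α hα α' hα'
    simp only [dif_pos hα, dif_pos hα']
    exact uniq α α' _ _ _ _ _ _ (exist α hα).choose_spec.1 (exist α hα).choose_spec.2
      (exist α' hα').choose_spec.1 (exist α' hα').choose_spec.2
end

section
/- Let v₁ and v be 1-Lipschitz, ε-strongly-hungry valuation functions with 0 < ε ≤ 1. Let α₂ (resp. α₄) denote the common piece value of the unique equipartition of [0,1] into 2 (resp. 4) equal parts according to v₁. Then for all distinct piece indices k, k' ∈ {1,2,3,4} and every α ∈ [α₄, α₂] there exists a unique division γ(α) = (ℓ(α), m(α), r(α)) such that v(P_k) = v(P_{k'}) and v₁(P_t) = α for both piece indices t ∉ {k, k'}; moreover γ is Lipschitz with constant 6/ε³ on [α₄, α₂] with respect to the ℓ₁-norm: |ℓ(α) − ℓ(α')| + |m(α) − m(α')| + |r(α) − r(α')| ≤ (6/ε³)·|α − α'| for all α, α' ∈ [α₄, α₂]. -/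
open Set

section helpers
variable {ε : ℝ} {v u : ℝ → ℝ → ℝ}

lemma val_nonneg (hv : IsValuation v) {a b : ℝ} (ha : a ∈ Icc (0:ℝ) 1)
    (hb : b ∈ Icc (0:ℝ) 1) : 0 ≤ v a b := (hv.2.1 a ha b hb).1

lemma lip1 (hlip : LipschitzVal 1 v) {a b a' b' : ℝ} (ha : a ∈ Icc (0:ℝ) 1)
    (hb : b ∈ Icc (0:ℝ) 1) (ha' : a' ∈ Icc (0:ℝ) 1) (hb' : b' ∈ Icc (0:ℝ) 1) :
    |v a b - v a' b'| ≤ |a - a'| + |b - b'| := by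
  simpa using hlip a b a' b' ha hb ha' hb'

/-- monotone in right endpoint -/
lemma vmono_right (hsh : StronglyHungry ε v) (hε : 0 ≤ ε) {a b b' : ℝ}
    (ha : 0 ≤ a) (hab : a ≤ b) (hbb : b ≤ b') (hb' : b' ≤ 1) : v a b ≤ v a b' := by
  have h := hsh a a b b' ha le_rfl hab hbb hb'
  nlinarith

/-- antitone in left endpoint -/
lemma vmono_left (hsh : StronglyHungry ε v) (hε : 0 ≤ ε) {a' a b : ℝ}
    (ha' : 0 ≤ a') (haa : a' ≤ a) (hab : a ≤ b) (hb : b ≤ 1) : v a b ≤ v a' b := by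
  have h := hsh a' a b b ha' haa hab le_rfl hb
  nlinarith

lemma cutL_bound' (hsh : StronglyHungry ε v) (hlip : LipschitzVal 1 v) {a b a' b' : ℝ}
    (ha' : 0 ≤ a') (h1 : a' ≤ a) (hab : a ≤ b) (hb1 : b ≤ 1) (hab' : a' ≤ b') (hb'1 : b' ≤ 1) :
    ε * (a - a') ≤ (v a' b' - v a b) + |b - b'| := by
  have ha : 0 ≤ a := le_trans ha' h1
  have hb0 : 0 ≤ b := le_trans ha hab
  have hb'0 : 0 ≤ b' := le_trans ha' hab'
  have h := hsh a' a b b ha' h1 hab le_rfl hb1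
  have h2 : |v a' b - v a' b'| ≤ |a' - a'| + |b - b'| :=
    lip1 hlip ⟨ha', le_trans h1 (le_trans hab hb1)⟩ ⟨hb0, hb1⟩
      ⟨ha', le_trans h1 (le_trans hab hb1)⟩ ⟨hb'0, hb'1⟩
  rw [sub_self, abs_zero, zero_add] at h2
  have h3 : v a' b - v a' b' ≤ |b - b'| := le_trans (le_abs_self _) h2
  nlinarith

lemma cutL_bound (hsh : StronglyHungry ε v) (hlip : LipschitzVal 1 v) {a b a' b' : ℝ}
    (ha : 0 ≤ a) (hab : a ≤ b) (hb1 : b ≤ 1) (ha' : 0 ≤ a') (hab' : a' ≤ b') (hb'1 : b' ≤ 1) :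
    ε * |a - a'| ≤ |v a b - v a' b'| + |b - b'| := by
  rcases le_total a' a with h | h
  · have := cutL_bound' hsh hlip ha' h hab hb1 hab' hb'1
    rw [abs_of_nonneg (sub_nonneg.2 h)]
    have h2 : v a' b' - v a b ≤ |v a b - v a' b'| := by
      rw [abs_sub_comm]; exact le_abs_self _
    linarith
  · have := cutL_bound' hsh hlip ha h hab' hb'1 hab hb1
    rw [abs_of_nonpos (sub_nonpos.2 h), abs_sub_comm b b'] at *
    have h2 : v a b - v a' b' ≤ |v a b - v a' b'| := le_abs_self _
    linarith

lemma cutR_bound' (hsh : StronglyHungry ε v) (hlip : LipschitzVal 1 v) {a b a' b' : ℝ}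
    (ha : 0 ≤ a) (hab : a ≤ b) (hbb : b ≤ b') (hb'1 : b' ≤ 1) (ha' : 0 ≤ a') (hab' : a' ≤ b') :
    ε * (b' - b) ≤ (v a' b' - v a b) + |a - a'| := by
  have hb0 : 0 ≤ b := le_trans ha hab
  have h := hsh a a b b' ha le_rfl hab hbb hb'1
  have h2 : |v a b' - v a' b'| ≤ |a - a'| + |b' - b'| :=
    lip1 hlip ⟨ha, le_trans hab (le_trans hbb hb'1)⟩ ⟨le_trans hb0 hbb, hb'1⟩
      ⟨ha', le_trans hab' hb'1⟩ ⟨le_trans hb0 hbb, hb'1⟩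
  rw [sub_self, abs_zero, add_zero] at h2
  have h3 : v a b' - v a' b' ≤ |a - a'| := le_trans (le_abs_self _) h2
  nlinarith

lemma cutR_bound (hsh : StronglyHungry ε v) (hlip : LipschitzVal 1 v) {a b a' b' : ℝ}
    (ha : 0 ≤ a) (hab : a ≤ b) (hb1 : b ≤ 1) (ha' : 0 ≤ a') (hab' : a' ≤ b') (hb'1 : b' ≤ 1) :
    ε * |b - b'| ≤ |v a b - v a' b'| + |a - a'| := by
  rcases le_total b b' with h | h
  · have h0 := cutR_bound' hsh hlip ha hab h hb'1 ha' hab'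
    rw [abs_of_nonpos (sub_nonpos.2 h)]
    have h2 : v a' b' - v a b ≤ |v a b - v a' b'| := by
      rw [abs_sub_comm]; exact le_abs_self _
    linarith
  · have h0 := cutR_bound' hsh hlip ha' hab' h hb1 ha hab
    rw [abs_of_nonneg (sub_nonneg.2 h)]
    rw [abs_sub_comm a' a] at h0
    have h2 : v a b - v a' b' ≤ |v a b - v a' b'| := le_abs_self _
    linarith

lemma balance_bound' (hsh : StronglyHungry ε u) (hlip : LipschitzVal 1 u)
    {x y z x' y' z' : ℝ}
    (hx : 0 ≤ x) (hxy : x ≤ y) (hyz : y ≤ z) (hz : z ≤ 1)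
    (hx' : 0 ≤ x') (hxy' : x' ≤ y') (hyz' : y' ≤ z') (hz' : z' ≤ 1)
    (hyy : y' ≤ y)
    (he : u x y = u y z) (he' : u x' y' = u y' z') :
    2 * ε * (y - y') ≤ |x - x'| + |z - z'| := by
  have hy1 : y ≤ 1 := le_trans hyz hz
  have hy'0 : 0 ≤ y' := le_trans hx' hxy'
  have h1 := hsh x' x' y' y hx' le_rfl hxy' hyy hy1
  have h2 : |u x y - u x' y| ≤ |x - x'| + |y - y| :=
    lip1 hlip ⟨hx, le_trans hxy hy1⟩ ⟨le_trans hx hxy, hy1⟩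
      ⟨hx', le_trans hxy' (le_trans hyy hy1)⟩ ⟨le_trans hx hxy, hy1⟩
  rw [sub_self, abs_zero, add_zero] at h2
  have h2' : u x' y - u x y ≤ |x - x'| := by
    have := neg_abs_le (u x y - u x' y); linarith
  have h3 := hsh y' y z z hy'0 hyy hyz le_rfl hz
  have h4 : |u y' z - u y' z'| ≤ |y' - y'| + |z - z'| :=
    lip1 hlip ⟨hy'0, le_trans hyy hy1⟩ ⟨le_trans hy'0 (le_trans hyy hyz), hz⟩
      ⟨hy'0, le_trans hyy hy1⟩ ⟨le_trans hx' (le_trans hxy' hyz'), hz'⟩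
  rw [sub_self, abs_zero, zero_add] at h4
  have h4' : u y' z - u y' z' ≤ |z - z'| := le_trans (le_abs_self _) h4
  nlinarith

lemma balance_bound (hsh : StronglyHungry ε u) (hlip : LipschitzVal 1 u)
    {x y z x' y' z' : ℝ}
    (hx : 0 ≤ x) (hxy : x ≤ y) (hyz : y ≤ z) (hz : z ≤ 1)
    (hx' : 0 ≤ x') (hxy' : x' ≤ y') (hyz' : y' ≤ z') (hz' : z' ≤ 1)
    (he : u x y = u y z) (he' : u x' y' = u y' z') :
    2 * ε * |y - y'| ≤ |x - x'| + |z - z'| := by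
  rcases le_total y' y with h | h
  · rw [abs_of_nonneg (sub_nonneg.2 h)]
    exact balance_bound' hsh hlip hx hxy hyz hz hx' hxy' hyz' hz' h he he'
  · rw [abs_of_nonpos (sub_nonpos.2 h)]
    have h0 := balance_bound' hsh hlip hx' hxy' hyz' hz' hx hxy hyz hz h he' he
    rw [abs_sub_comm x' x, abs_sub_comm z' z] at h0
    linarith

lemma contOn_left (hlip : LipschitzVal 1 v) {b : ℝ} (hb : b ∈ Icc (0:ℝ) 1) :
    ContinuousOn (fun a => v a b) (Icc 0 1) := by
  refine LipschitzOnWith.continuousOn (K := 1) (LipschitzOnWith.of_dist_le_mul ?_)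
  intro x hx y hy
  rw [Real.dist_eq, Real.dist_eq]
  have := lip1 hlip hx hb hy hb
  rw [sub_self, abs_zero, add_zero] at this
  simpa using this

lemma contOn_right (hlip : LipschitzVal 1 v) {a : ℝ} (ha : a ∈ Icc (0:ℝ) 1) :
    ContinuousOn (fun b => v a b) (Icc 0 1) := by
  refine LipschitzOnWith.continuousOn (K := 1) (LipschitzOnWith.of_dist_le_mul ?_)
  intro x hx y hy
  rw [Real.dist_eq, Real.dist_eq]
  have := lip1 hlip ha hx ha hy
  rw [sub_self, abs_zero, zero_add] at this
  simpa using this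

lemma exists_cutL (hv : IsValuation v) (hlip : LipschitzVal 1 v) {α b : ℝ}
    (hα : 0 ≤ α) (hb : b ∈ Icc (0:ℝ) 1) (hvb : α ≤ v 0 b) :
    ∃ a, a ∈ Icc 0 b ∧ v a b = α := by
  have h0b : (0:ℝ) ≤ b := hb.1
  have hc : ContinuousOn (fun a => v a b) (Icc 0 b) :=
    (contOn_left hlip hb).mono (Icc_subset_Icc le_rfl hb.2)
  have hbb : v b b = 0 := hv.2.2 b hb b hb le_rfl
  have him := intermediate_value_Icc' h0b hc
  have : α ∈ (fun a => v a b) '' Icc 0 b := him (by rw [hbb]; exact ⟨hα, hvb⟩)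
  obtain ⟨a, ha, hva⟩ := this
  exact ⟨a, ha, hva⟩

lemma exists_cutR (hv : IsValuation v) (hlip : LipschitzVal 1 v) {α a : ℝ}
    (hα : 0 ≤ α) (ha : a ∈ Icc (0:ℝ) 1) (hva : α ≤ v a 1) :
    ∃ b, b ∈ Icc a 1 ∧ v a b = α := by
  have hc : ContinuousOn (fun b => v a b) (Icc a 1) :=
    (contOn_right hlip ha).mono (Icc_subset_Icc ha.1 le_rfl)
  have haa : v a a = 0 := hv.2.2 a ha a ha le_rfl
  have him := intermediate_value_Icc ha.2 hc
  have : α ∈ (fun b => v a b) '' Icc a 1 := him (by rw [haa]; exact ⟨hα, hva⟩)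
  obtain ⟨b, hbmem, hvb⟩ := this
  exact ⟨b, hbmem, hvb⟩

lemma exists_balance (hu : IsValuation u) (hlip : LipschitzVal 1 u) {x z : ℝ}
    (hx : 0 ≤ x) (hxz : x ≤ z) (hz : z ≤ 1) :
    ∃ y ∈ Icc x z, u x y = u y z := by
  have hxI : x ∈ Icc (0:ℝ) 1 := ⟨hx, le_trans hxz hz⟩
  have hzI : z ∈ Icc (0:ℝ) 1 := ⟨le_trans hx hxz, hz⟩
  set f : ℝ → ℝ := fun y => u x y - u y z with hf
  have hc : ContinuousOn f (Icc x z) := by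
    refine ContinuousOn.sub ?_ ?_
    · exact ((contOn_right hlip hxI).mono (Icc_subset_Icc hx hz))
    · exact ((contOn_left hlip hzI).mono (Icc_subset_Icc hx hz))
  have hfx : f x = -(u x z) := by
    simp only [hf]; rw [hu.2.2 x hxI x hxI le_rfl]; ring
  have hfz : f z = u x z := by
    simp only [hf]; rw [hu.2.2 z hzI z hzI le_rfl]; ring
  have hnn : 0 ≤ u x z := val_nonneg hu hxI hzI
  have him := intermediate_value_Icc hxz hc
  have : (0:ℝ) ∈ f '' Icc x z := him (by rw [hfx, hfz]; constructor <;> linarith)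
  obtain ⟨y, hy, hfy⟩ := this
  exact ⟨y, hy, by simpa [hf, sub_eq_zero] using hfy⟩

open Classical in
noncomputable def cutLf (v : ℝ → ℝ → ℝ) (α b : ℝ) : ℝ :=
  if h : ∃ a, a ∈ Icc (0:ℝ) b ∧ v a b = α then h.choose else 0

open Classical in
noncomputable def cutRf (v : ℝ → ℝ → ℝ) (α a : ℝ) : ℝ :=
  if h : ∃ b, b ∈ Icc a 1 ∧ v a b = α then h.choose else 0

lemma cutLf_spec (hv : IsValuation v) (hlip : LipschitzVal 1 v) {α b : ℝ}
    (hα : 0 ≤ α) (hb : b ∈ Icc (0:ℝ) 1) (hvb : α ≤ v 0 b) :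
    cutLf v α b ∈ Icc (0:ℝ) b ∧ v (cutLf v α b) b = α := by
  have h := exists_cutL hv hlip hα hb hvb
  rw [cutLf, dif_pos h]
  exact h.choose_spec

lemma cutRf_spec (hv : IsValuation v) (hlip : LipschitzVal 1 v) {α a : ℝ}
    (hα : 0 ≤ α) (ha : a ∈ Icc (0:ℝ) 1) (hva : α ≤ v a 1) :
    cutRf v α a ∈ Icc a 1 ∧ v a (cutRf v α a) = α := by
  have h := exists_cutR hv hlip hα ha hva
  rw [cutRf, dif_pos h]
  exact h.choose_spec

lemma cutL_eq (hε0 : 0 < ε) (hsh : StronglyHungry ε v) (hlip : LipschitzVal 1 v) {α a a' b : ℝ}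
    (ha : 0 ≤ a) (hab : a ≤ b) (hb1 : b ≤ 1) (ha' : 0 ≤ a') (hab' : a' ≤ b)
    (h1 : v a b = α) (h2 : v a' b = α) : a = a' := by
  have h := cutL_bound hsh hlip ha hab hb1 ha' hab' hb1
  rw [h1, h2] at h
  simp only [sub_self, abs_zero, add_zero] at h
  have h0 : |a - a'| = 0 := le_antisymm (by nlinarith [abs_nonneg (a - a')]) (abs_nonneg _)
  have := sub_eq_zero.1 (abs_eq_zero.1 h0)
  linarith

lemma cutR_eq (hε0 : 0 < ε) (hsh : StronglyHungry ε v) (hlip : LipschitzVal 1 v) {α a b b' : ℝ}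
    (ha : 0 ≤ a) (hab : a ≤ b) (hb1 : b ≤ 1) (hab' : a ≤ b') (hb'1 : b' ≤ 1)
    (h1 : v a b = α) (h2 : v a b' = α) : b = b' := by
  have h := cutR_bound hsh hlip ha hab hb1 ha hab' hb'1
  rw [h1, h2] at h
  simp only [sub_self, abs_zero, add_zero] at h
  have h0 : |b - b'| = 0 := le_antisymm (by nlinarith [abs_nonneg (b - b')]) (abs_nonneg _)
  have := sub_eq_zero.1 (abs_eq_zero.1 h0)
  linarith

/-- if `v r 1 = α ≤ α₂ = v c₂ 1` then `c₂ ≤ r`. -/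
lemma c2_le_cut (hε0 : 0 < ε) (hsh : StronglyHungry ε v) {α α₂ c₂ r : ℝ}
    (hc1 : c₂ ≤ 1) (hr : 0 ≤ r) (hc : v c₂ 1 = α₂) (hr1 : v r 1 = α) (hα : α ≤ α₂) :
    c₂ ≤ r := by
  by_contra hcon
  push_neg at hcon
  have h := hsh r c₂ 1 1 hr hcon.le hc1 le_rfl le_rfl
  nlinarith

/-- if `v 0 ℓ = α ≤ α₂ = v 0 c₂` then `ℓ ≤ c₂`. -/
lemma cut_le_c2 (hε0 : 0 < ε) (hsh : StronglyHungry ε v) {α α₂ c₂ l : ℝ}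
    (hc0 : 0 ≤ c₂) (hl : l ≤ 1) (hc : v 0 c₂ = α₂) (hl0 : v 0 l = α) (hα : α ≤ α₂) :
    l ≤ c₂ := by
  by_contra hcon
  push_neg at hcon
  have h := hsh 0 0 c₂ l le_rfl le_rfl hc0 hcon.le hl
  nlinarith

lemma assemble {α₄ α₂ : ℝ} (C : ℝ) (Q : ℝ → ℝ → ℝ → ℝ → Prop)
    (hex : ∀ α ∈ Icc α₄ α₂, ∃ ℓ m r, Q α ℓ m r)
    (hbd : ∀ α ∈ Icc α₄ α₂, ∀ α' ∈ Icc α₄ α₂, ∀ ℓ m r ℓ' m' r',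
      Q α ℓ m r → Q α' ℓ' m' r' →
      |ℓ - ℓ'| + |m - m'| + |r - r'| ≤ C * |α - α'|) :
    ∃ γ : ℝ → ℝ × ℝ × ℝ,
      (∀ α ∈ Icc α₄ α₂, ∀ ℓ m r : ℝ, ((ℓ, m, r) = γ α ↔ Q α ℓ m r)) ∧
      (∀ α ∈ Icc α₄ α₂, ∀ α' ∈ Icc α₄ α₂,
        |(γ α).1 - (γ α').1| + |(γ α).2.1 - (γ α').2.1| + |(γ α).2.2 - (γ α').2.2|
          ≤ C * |α - α'|) := by
  classical
  have key : ∀ α ∈ Icc α₄ α₂, ∃ p : ℝ × ℝ × ℝ, Q α p.1 p.2.1 p.2.2 := by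
    intro α hα
    obtain ⟨a, b, c, h⟩ := hex α hα
    exact ⟨(a, b, c), h⟩
  refine ⟨fun α => if h : ∃ p : ℝ × ℝ × ℝ, Q α p.1 p.2.1 p.2.2 then h.choose else (0, 0, 0),
    ?_, ?_⟩
  · intro α hα ℓ m r
    have hex' := key α hα
    simp only [dif_pos hex']
    have hQp := hex'.choose_spec
    constructor
    · intro h
      rw [← h] at hQp
      exact hQp
    · intro hQ
      have hb := hbd α hα α hα ℓ m r _ _ _ hQ hQp
      rw [sub_self, abs_zero, mul_zero] at hb
      have h1 : |ℓ - hex'.choose.1| = 0 := by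
        have := abs_nonneg (ℓ - hex'.choose.1)
        have := abs_nonneg (m - hex'.choose.2.1)
        have := abs_nonneg (r - hex'.choose.2.2)
        linarith
      have h2 : |m - hex'.choose.2.1| = 0 := by
        have := abs_nonneg (ℓ - hex'.choose.1)
        have := abs_nonneg (m - hex'.choose.2.1)
        have := abs_nonneg (r - hex'.choose.2.2)
        linarith
      have h3 : |r - hex'.choose.2.2| = 0 := by
        have := abs_nonneg (ℓ - hex'.choose.1)
        have := abs_nonneg (m - hex'.choose.2.1)
        have := abs_nonneg (r - hex'.choose.2.2)
        linarith
      have e1 : ℓ = hex'.choose.1 := by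
        have := abs_eq_zero.1 h1; linarith [sub_eq_zero.1 this]
      have e2 : m = hex'.choose.2.1 := by
        have := abs_eq_zero.1 h2; linarith [sub_eq_zero.1 this]
      have e3 : r = hex'.choose.2.2 := by
        have := abs_eq_zero.1 h3; linarith [sub_eq_zero.1 this]
      rw [e1, e2, e3]
  · intro α hα α' hα'
    have hex1 := key α hα
    have hex2 := key α' hα'
    simp only [dif_pos hex1, dif_pos hex2]
    exact hbd α hα α' hα' _ _ _ _ _ _ hex1.choose_spec hex2.choose_spec

lemma abs_sub'' (a b : ℝ) : |a - b| ≤ |a| + |b| := by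
  calc |a - b| = |a + -b| := by ring_nf
    _ ≤ |a| + |-b| := abs_add_le _ _
    _ = |a| + |b| := by rw [abs_neg]

lemma contOn_of_lip {f : ℝ → ℝ} {s : Set ℝ} {K : ℝ} (hK : 0 ≤ K)
    (h : ∀ x ∈ s, ∀ y ∈ s, |f x - f y| ≤ K * |x - y|) : ContinuousOn f s := by
  refine LipschitzOnWith.continuousOn (K := Real.toNNReal K)
    (LipschitzOnWith.of_dist_le_mul ?_)
  intro x hx y hy
  rw [Real.dist_eq, Real.dist_eq, Real.coe_toNNReal K hK]
  exact h x hx y hy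

section existence

variable {ε : ℝ} {v u : ℝ → ℝ → ℝ} {α₂ c₂ α : ℝ}

variable (hε0 : 0 < ε) (hv : IsValuation v) (hvlip : LipschitzVal 1 v)
  (hvsh : StronglyHungry ε v) (hu : IsValuation u) (hulip : LipschitzVal 1 u)
  (hc0 : 0 ≤ c₂) (hc1 : c₂ ≤ 1) (hcL : v 0 c₂ = α₂) (hcR : v c₂ 1 = α₂)
  (hα0 : 0 ≤ α) (hα2 : α ≤ α₂)

include hε0 hv hvlip hvsh hc0 hc1 hcR hα0 hα2 in
/-- right cut `r` with `v r 1 = α`, satisfying `c₂ ≤ r`. -/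
lemma exR1 : ∃ r, r ∈ Icc (0:ℝ) 1 ∧ v r 1 = α ∧ c₂ ≤ r := by
  have hv01 : α ≤ v 0 1 := by
    have := vmono_left hvsh hε0.le le_rfl hc0 hc1 le_rfl
    linarith
  obtain ⟨r, hrI, hr1⟩ := exists_cutL hv hvlip hα0 ⟨zero_le_one, le_rfl⟩ hv01
  exact ⟨r, hrI, hr1, c2_le_cut hε0 hvsh hc1 hrI.1 hcR hr1 hα2⟩

include hε0 hv hvlip hvsh hc0 hc1 hcL hcR hα0 hα2 in
/-- left cut `ℓ` with `v 0 ℓ = α`, satisfying `ℓ ≤ c₂`. -/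
lemma exL1 : ∃ l, l ∈ Icc (0:ℝ) 1 ∧ v 0 l = α ∧ l ≤ c₂ := by
  have hv01 : α ≤ v 0 1 := by
    have := vmono_left hvsh hε0.le le_rfl hc0 hc1 le_rfl
    linarith
  obtain ⟨l, hlI, hl⟩ := exists_cutR hv hvlip hα0 ⟨le_rfl, zero_le_one⟩ hv01
  exact ⟨l, hlI, hl, cut_le_c2 hε0 hvsh hc0 hlI.2 hcL hl hα2⟩

include hε0 hv hvlip hvsh hu hulip hc0 hc1 hcL hcR hα0 hα2 in
lemma ex01 : ∃ ℓ m r, IsDiv ℓ m r ∧ u 0 ℓ = u ℓ m ∧ v m r = α ∧ v r 1 = α := by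
  obtain ⟨r, hrI, hr1, hc2r⟩ := exR1 hε0 hv hvlip hvsh hc0 hc1 hcR hα0 hα2
  have hv0r : α ≤ v 0 r := by
    have := vmono_right hvsh hε0.le le_rfl hc0 hc2r hrI.2
    linarith
  obtain ⟨m, hmI, hmr⟩ := exists_cutL hv hvlip hα0 hrI hv0r
  obtain ⟨ℓ, hlI, hbal⟩ := exists_balance hu hulip le_rfl hmI.1 (le_trans hmI.2 hrI.2)
  exact ⟨ℓ, m, r, ⟨hlI.1, hlI.2, hmI.2, hrI.2⟩, hbal, hmr, hr1⟩

include hε0 hv hvlip hvsh hu hulip hc0 hc1 hcL hcR hα0 hα2 in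
lemma ex23 : ∃ ℓ m r, IsDiv ℓ m r ∧ u m r = u r 1 ∧ v 0 ℓ = α ∧ v ℓ m = α := by
  obtain ⟨ℓ, hlI, hl, hlc2⟩ := exL1 hε0 hv hvlip hvsh hc0 hc1 hcL hcR hα0 hα2
  have hvl1 : α ≤ v ℓ 1 := by
    have := vmono_left hvsh hε0.le hlI.1 hlc2 hc1 le_rfl
    linarith
  obtain ⟨m, hmI, hlm⟩ := exists_cutR hv hvlip hα0 hlI hvl1
  obtain ⟨r, hrI, hbal⟩ := exists_balance hu hulip (le_trans hlI.1 hmI.1) hmI.2 le_rfl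
  exact ⟨ℓ, m, r, ⟨hlI.1, hmI.1, hrI.1, hrI.2⟩, hbal, hl, hlm⟩

include hε0 hv hvlip hvsh hu hulip hc0 hc1 hcL hcR hα0 hα2 in
lemma ex12 : ∃ ℓ m r, IsDiv ℓ m r ∧ u ℓ m = u m r ∧ v 0 ℓ = α ∧ v r 1 = α := by
  obtain ⟨ℓ, hlI, hl, hlc2⟩ := exL1 hε0 hv hvlip hvsh hc0 hc1 hcL hcR hα0 hα2
  obtain ⟨r, hrI, hr1, hc2r⟩ := exR1 hε0 hv hvlip hvsh hc0 hc1 hcR hα0 hα2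
  obtain ⟨m, hmI, hbal⟩ := exists_balance hu hulip hlI.1 (le_trans hlc2 hc2r) hrI.2
  exact ⟨ℓ, m, r, ⟨hlI.1, hmI.1, hmI.2, hrI.2⟩, hbal, hl, hr1⟩

include hε0 hv hvlip hvsh hu hulip hc0 hc1 hcL hcR hα0 hα2 in
lemma ex02 : ∃ ℓ m r, IsDiv ℓ m r ∧ u 0 ℓ = u m r ∧ v ℓ m = α ∧ v r 1 = α := by
  obtain ⟨r, hrI, hr1, hc2r⟩ := exR1 hε0 hv hvlip hvsh hc0 hc1 hcR hα0 hα2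
  obtain ⟨m₀, hm0I, hm0, hm0c2⟩ := exL1 hε0 hv hvlip hvsh hc0 hc1 hcL hcR hα0 hα2
  have hm0r : m₀ ≤ r := le_trans hm0c2 hc2r
  set g : ℝ → ℝ := fun x => u 0 (cutLf v α x) - u x r with hg
  have hspec : ∀ x ∈ Icc m₀ r, cutLf v α x ∈ Icc (0:ℝ) x ∧ v (cutLf v α x) x = α := by
    intro x hx
    have hxI : x ∈ Icc (0:ℝ) 1 := ⟨le_trans hm0I.1 hx.1, le_trans hx.2 hrI.2⟩
    have hax : α ≤ v 0 x := by
      have := vmono_right hvsh hε0.le le_rfl hm0I.1 hx.1 hxI.2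
      linarith
    exact cutLf_spec hv hvlip hα0 hxI hax
  have hcont : ContinuousOn g (Icc m₀ r) := by
    apply contOn_of_lip (K := 1/ε + 1) (by positivity)
    intro x hx y hy
    have sx := hspec x hx; have sy := hspec y hy
    have hxI : x ∈ Icc (0:ℝ) 1 := ⟨le_trans hm0I.1 hx.1, le_trans hx.2 hrI.2⟩
    have hyI : y ∈ Icc (0:ℝ) 1 := ⟨le_trans hm0I.1 hy.1, le_trans hy.2 hrI.2⟩
    have hcb := cutL_bound hvsh hvlip sx.1.1 sx.1.2 hxI.2 sy.1.1 sy.1.2 hyI.2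
    rw [sx.2, sy.2] at hcb
    rw [sub_self, abs_zero, zero_add] at hcb
    have h1 : |u 0 (cutLf v α x) - u 0 (cutLf v α y)| ≤
        |(0:ℝ) - 0| + |cutLf v α x - cutLf v α y| :=
      lip1 hulip ⟨le_rfl, zero_le_one⟩ ⟨sx.1.1, le_trans sx.1.2 hxI.2⟩
        ⟨le_rfl, zero_le_one⟩ ⟨sy.1.1, le_trans sy.1.2 hyI.2⟩
    rw [sub_self, abs_zero, zero_add] at h1
    have h2 : |u x r - u y r| ≤ |x - y| + |r - r| :=
      lip1 hulip hxI hrI hyI hrI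
    rw [sub_self, abs_zero, add_zero] at h2
    have h3 : |g x - g y| ≤
        |u 0 (cutLf v α x) - u 0 (cutLf v α y)| + |u x r - u y r| := by
      have heq : g x - g y =
          (u 0 (cutLf v α x) - u 0 (cutLf v α y)) - (u x r - u y r) := by
        simp only [hg]; ring
      rw [heq]; exact abs_sub'' _ _
    have h4 : |cutLf v α x - cutLf v α y| ≤ 1/ε * |x - y| := by
      rw [div_mul_eq_mul_div, le_div_iff₀ hε0]
      linarith
    linarith
  have hmem0 : m₀ ∈ Icc m₀ r := ⟨le_rfl, hm0r⟩
  have hmemr : r ∈ Icc m₀ r := ⟨hm0r, le_rfl⟩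
  have s0 := hspec m₀ hmem0
  have sr := hspec r hmemr
  have hcL0 : cutLf v α m₀ = 0 :=
    cutL_eq hε0 hvsh hvlip s0.1.1 s0.1.2 hm0I.2 le_rfl hm0I.1 s0.2 hm0
  have hu00 : u 0 0 = 0 := hu.2.2 0 ⟨le_rfl, zero_le_one⟩ 0 ⟨le_rfl, zero_le_one⟩ le_rfl
  have hurr : u r r = 0 := hu.2.2 r hrI r hrI le_rfl
  have hg0 : g m₀ ≤ 0 := by
    simp only [hg, hcL0, hu00, zero_sub, neg_nonpos]
    exact val_nonneg hu ⟨hm0I.1, le_trans hm0r hrI.2⟩ hrI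
  have hgr : 0 ≤ g r := by
    simp only [hg, hurr, sub_zero]
    exact val_nonneg hu ⟨le_rfl, zero_le_one⟩ ⟨sr.1.1, le_trans sr.1.2 hrI.2⟩
  have him := intermediate_value_Icc hm0r hcont
  have : (0:ℝ) ∈ g '' Icc m₀ r := him ⟨hg0, hgr⟩
  obtain ⟨m, hm, hgm⟩ := this
  have sm := hspec m hm
  refine ⟨cutLf v α m, m, r, ⟨sm.1.1, sm.1.2, hm.2, hrI.2⟩, ?_, sm.2, hr1⟩
  have : u 0 (cutLf v α m) - u m r = 0 := hgm
  linarith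

include hε0 hv hvlip hvsh hu hulip hc0 hc1 hcL hcR hα0 hα2 in
lemma ex13 : ∃ ℓ m r, IsDiv ℓ m r ∧ u ℓ m = u r 1 ∧ v 0 ℓ = α ∧ v m r = α := by
  obtain ⟨ℓ, hlI, hl, hlc2⟩ := exL1 hε0 hv hvlip hvsh hc0 hc1 hcL hcR hα0 hα2
  obtain ⟨m₁, hm1I, hm1, hc2m1⟩ := exR1 hε0 hv hvlip hvsh hc0 hc1 hcR hα0 hα2
  have hlm1 : ℓ ≤ m₁ := le_trans hlc2 hc2m1
  set g : ℝ → ℝ := fun x => u ℓ x - u (cutRf v α x) 1 with hg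
  have hspec : ∀ x ∈ Icc ℓ m₁, cutRf v α x ∈ Icc x 1 ∧ v x (cutRf v α x) = α := by
    intro x hx
    have hxI : x ∈ Icc (0:ℝ) 1 := ⟨le_trans hlI.1 hx.1, le_trans hx.2 hm1I.2⟩
    have hax : α ≤ v x 1 := by
      have := vmono_left hvsh hε0.le hxI.1 hx.2 hm1I.2 le_rfl
      linarith
    exact cutRf_spec hv hvlip hα0 hxI hax
  have hcont : ContinuousOn g (Icc ℓ m₁) := by
    apply contOn_of_lip (K := 1/ε + 1) (by positivity)
    intro x hx y hy
    have sx := hspec x hx; have sy := hspec y hy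
    have hxI : x ∈ Icc (0:ℝ) 1 := ⟨le_trans hlI.1 hx.1, le_trans hx.2 hm1I.2⟩
    have hyI : y ∈ Icc (0:ℝ) 1 := ⟨le_trans hlI.1 hy.1, le_trans hy.2 hm1I.2⟩
    have hcb := cutR_bound hvsh hvlip hxI.1 sx.1.1 sx.1.2 hyI.1 sy.1.1 sy.1.2
    rw [sx.2, sy.2] at hcb
    rw [sub_self, abs_zero, zero_add] at hcb
    have h1 : |u ℓ x - u ℓ y| ≤ |ℓ - ℓ| + |x - y| := lip1 hulip hlI hxI hlI hyI
    rw [sub_self, abs_zero, zero_add] at h1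
    have h2 : |u (cutRf v α x) 1 - u (cutRf v α y) 1| ≤
        |cutRf v α x - cutRf v α y| + |(1:ℝ) - 1| :=
      lip1 hulip ⟨le_trans hxI.1 sx.1.1, sx.1.2⟩ ⟨zero_le_one, le_rfl⟩
        ⟨le_trans hyI.1 sy.1.1, sy.1.2⟩ ⟨zero_le_one, le_rfl⟩
    rw [sub_self, abs_zero, add_zero] at h2
    have h3 : |g x - g y| ≤
        |u ℓ x - u ℓ y| + |u (cutRf v α x) 1 - u (cutRf v α y) 1| := by
      have heq : g x - g y =
          (u ℓ x - u ℓ y) - (u (cutRf v α x) 1 - u (cutRf v α y) 1) := by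
        simp only [hg]; ring
      rw [heq]; exact abs_sub'' _ _
    have h4 : |cutRf v α x - cutRf v α y| ≤ 1/ε * |x - y| := by
      rw [div_mul_eq_mul_div, le_div_iff₀ hε0]
      linarith
    linarith
  have hmeml : ℓ ∈ Icc ℓ m₁ := ⟨le_rfl, hlm1⟩
  have hmem1 : m₁ ∈ Icc ℓ m₁ := ⟨hlm1, le_rfl⟩
  have sl := hspec ℓ hmeml
  have s1 := hspec m₁ hmem1
  have hcR1 : cutRf v α m₁ = 1 :=
    cutR_eq hε0 hvsh hvlip hm1I.1 s1.1.1 s1.1.2 hm1I.2 le_rfl s1.2 hm1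
  have hull : u ℓ ℓ = 0 := hu.2.2 ℓ hlI ℓ hlI le_rfl
  have hu11 : u 1 1 = 0 := hu.2.2 1 ⟨zero_le_one, le_rfl⟩ 1 ⟨zero_le_one, le_rfl⟩ le_rfl
  have hg0 : g ℓ ≤ 0 := by
    simp only [hg, hull, zero_sub, neg_nonpos]
    exact val_nonneg hu ⟨le_trans hlI.1 sl.1.1, sl.1.2⟩ ⟨zero_le_one, le_rfl⟩
  have hgr : 0 ≤ g m₁ := by
    simp only [hg, hcR1, hu11, sub_zero]
    exact val_nonneg hu hlI hm1I
  have him := intermediate_value_Icc hlm1 hcont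
  have : (0:ℝ) ∈ g '' Icc ℓ m₁ := him ⟨hg0, hgr⟩
  obtain ⟨m, hm, hgm⟩ := this
  have sm := hspec m hm
  refine ⟨ℓ, m, cutRf v α m, ⟨hlI.1, hm.1, sm.1.1, sm.1.2⟩, ?_, hl, sm.2⟩
  have : u ℓ m - u (cutRf v α m) 1 = 0 := hgm
  linarith

include hε0 hv hvlip hvsh hu hulip hc0 hc1 hcL hcR hα0 hα2 in
lemma ex03 : ∃ ℓ m r, IsDiv ℓ m r ∧ u 0 ℓ = u r 1 ∧ v ℓ m = α ∧ v m r = α := by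
  obtain ⟨m₀, hm0I, hm0, hm0c2⟩ := exL1 hε0 hv hvlip hvsh hc0 hc1 hcL hcR hα0 hα2
  obtain ⟨m₁, hm1I, hm1, hc2m1⟩ := exR1 hε0 hv hvlip hvsh hc0 hc1 hcR hα0 hα2
  have hm01 : m₀ ≤ m₁ := le_trans hm0c2 hc2m1
  set g : ℝ → ℝ := fun x => u 0 (cutLf v α x) - u (cutRf v α x) 1 with hg
  have hspecL : ∀ x ∈ Icc m₀ m₁, cutLf v α x ∈ Icc (0:ℝ) x ∧ v (cutLf v α x) x = α := by
    intro x hx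
    have hxI : x ∈ Icc (0:ℝ) 1 := ⟨le_trans hm0I.1 hx.1, le_trans hx.2 hm1I.2⟩
    have hax : α ≤ v 0 x := by
      have := vmono_right hvsh hε0.le le_rfl hm0I.1 hx.1 hxI.2
      linarith
    exact cutLf_spec hv hvlip hα0 hxI hax
  have hspecR : ∀ x ∈ Icc m₀ m₁, cutRf v α x ∈ Icc x 1 ∧ v x (cutRf v α x) = α := by
    intro x hx
    have hxI : x ∈ Icc (0:ℝ) 1 := ⟨le_trans hm0I.1 hx.1, le_trans hx.2 hm1I.2⟩
    have hax : α ≤ v x 1 := by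
      have := vmono_left hvsh hε0.le hxI.1 hx.2 hm1I.2 le_rfl
      linarith
    exact cutRf_spec hv hvlip hα0 hxI hax
  have hcont : ContinuousOn g (Icc m₀ m₁) := by
    apply contOn_of_lip (K := 1/ε + 1/ε) (by positivity)
    intro x hx y hy
    have sx := hspecL x hx; have sy := hspecL y hy
    have tx := hspecR x hx; have ty := hspecR y hy
    have hxI : x ∈ Icc (0:ℝ) 1 := ⟨le_trans hm0I.1 hx.1, le_trans hx.2 hm1I.2⟩
    have hyI : y ∈ Icc (0:ℝ) 1 := ⟨le_trans hm0I.1 hy.1, le_trans hy.2 hm1I.2⟩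
    have hcb := cutL_bound hvsh hvlip sx.1.1 sx.1.2 hxI.2 sy.1.1 sy.1.2 hyI.2
    rw [sx.2, sy.2] at hcb
    rw [sub_self, abs_zero, zero_add] at hcb
    have hcb' := cutR_bound hvsh hvlip hxI.1 tx.1.1 tx.1.2 hyI.1 ty.1.1 ty.1.2
    rw [tx.2, ty.2] at hcb'
    rw [sub_self, abs_zero, zero_add] at hcb'
    have h1 : |u 0 (cutLf v α x) - u 0 (cutLf v α y)| ≤
        |(0:ℝ) - 0| + |cutLf v α x - cutLf v α y| :=
      lip1 hulip ⟨le_rfl, zero_le_one⟩ ⟨sx.1.1, le_trans sx.1.2 hxI.2⟩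
        ⟨le_rfl, zero_le_one⟩ ⟨sy.1.1, le_trans sy.1.2 hyI.2⟩
    rw [sub_self, abs_zero, zero_add] at h1
    have h2 : |u (cutRf v α x) 1 - u (cutRf v α y) 1| ≤
        |cutRf v α x - cutRf v α y| + |(1:ℝ) - 1| :=
      lip1 hulip ⟨le_trans hxI.1 tx.1.1, tx.1.2⟩ ⟨zero_le_one, le_rfl⟩
        ⟨le_trans hyI.1 ty.1.1, ty.1.2⟩ ⟨zero_le_one, le_rfl⟩
    rw [sub_self, abs_zero, add_zero] at h2
    have h3 : |g x - g y| ≤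
        |u 0 (cutLf v α x) - u 0 (cutLf v α y)| +
          |u (cutRf v α x) 1 - u (cutRf v α y) 1| := by
      have heq : g x - g y =
          (u 0 (cutLf v α x) - u 0 (cutLf v α y)) -
            (u (cutRf v α x) 1 - u (cutRf v α y) 1) := by
        simp only [hg]; ring
      rw [heq]; exact abs_sub'' _ _
    have h4 : |cutLf v α x - cutLf v α y| ≤ 1/ε * |x - y| := by
      rw [div_mul_eq_mul_div, le_div_iff₀ hε0]
      linarith
    have h5 : |cutRf v α x - cutRf v α y| ≤ 1/ε * |x - y| := by
      rw [div_mul_eq_mul_div, le_div_iff₀ hε0]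
      linarith
    linarith
  have hmem0 : m₀ ∈ Icc m₀ m₁ := ⟨le_rfl, hm01⟩
  have hmem1 : m₁ ∈ Icc m₀ m₁ := ⟨hm01, le_rfl⟩
  have s0 := hspecL m₀ hmem0
  have t0 := hspecR m₀ hmem0
  have s1 := hspecL m₁ hmem1
  have t1 := hspecR m₁ hmem1
  have hcL0 : cutLf v α m₀ = 0 :=
    cutL_eq hε0 hvsh hvlip s0.1.1 s0.1.2 hm0I.2 le_rfl hm0I.1 s0.2 hm0
  have hcR1 : cutRf v α m₁ = 1 :=
    cutR_eq hε0 hvsh hvlip hm1I.1 t1.1.1 t1.1.2 hm1I.2 le_rfl t1.2 hm1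
  have hu00 : u 0 0 = 0 := hu.2.2 0 ⟨le_rfl, zero_le_one⟩ 0 ⟨le_rfl, zero_le_one⟩ le_rfl
  have hu11 : u 1 1 = 0 := hu.2.2 1 ⟨zero_le_one, le_rfl⟩ 1 ⟨zero_le_one, le_rfl⟩ le_rfl
  have hg0 : g m₀ ≤ 0 := by
    simp only [hg, hcL0, hu00, zero_sub, neg_nonpos]
    exact val_nonneg hu ⟨le_trans hm0I.1 t0.1.1, t0.1.2⟩ ⟨zero_le_one, le_rfl⟩
  have hgr : 0 ≤ g m₁ := by
    simp only [hg, hcR1, hu11, sub_zero]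
    exact val_nonneg hu ⟨le_rfl, zero_le_one⟩ ⟨s1.1.1, le_trans s1.1.2 hm1I.2⟩
  have him := intermediate_value_Icc hm01 hcont
  have : (0:ℝ) ∈ g '' Icc m₀ m₁ := him ⟨hg0, hgr⟩
  obtain ⟨m, hm, hgm⟩ := this
  have sm := hspecL m hm
  have tm := hspecR m hm
  refine ⟨cutLf v α m, m, cutRf v α m, ⟨sm.1.1, sm.1.2, tm.1.1, tm.1.2⟩, ?_, sm.2, tm.2⟩
  have : u 0 (cutLf v α m) - u (cutRf v α m) 1 = 0 := hgm
  linarith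

end existence
end helpers

section bounds
variable {ε : ℝ} {v u : ℝ → ℝ → ℝ}

lemma bd01 (hε0 : 0 < ε) (hε1 : ε ≤ 1) (hvsh : StronglyHungry ε v)
    (hvlip : LipschitzVal 1 v) (hush : StronglyHungry ε u) (hulip : LipschitzVal 1 u)
    {α α' ℓ m r ℓ' m' r' : ℝ}
    (hd : IsDiv ℓ m r) (hd' : IsDiv ℓ' m' r')
    (hbal : u 0 ℓ = u ℓ m) (hmr : v m r = α) (hr1 : v r 1 = α)
    (hbal' : u 0 ℓ' = u ℓ' m') (hmr' : v m' r' = α') (hr1' : v r' 1 = α') :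
    |ℓ - ℓ'| + |m - m'| + |r - r'| ≤ 6 / ε ^ 3 * |α - α'| := by
  obtain ⟨h0l, hlm, hmrle, hrle⟩ := hd
  obtain ⟨h0l', hlm', hmrle', hrle'⟩ := hd'
  have h0m : 0 ≤ m := le_trans h0l hlm
  have h0m' : 0 ≤ m' := le_trans h0l' hlm'
  have h0r : 0 ≤ r := le_trans h0m hmrle
  have h0r' : 0 ≤ r' := le_trans h0m' hmrle'
  have hm1 : m ≤ 1 := le_trans hmrle hrle
  have hm1' : m' ≤ 1 := le_trans hmrle' hrle'
  have h1 : ε * |r - r'| ≤ |α - α'| := by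
    have h := cutL_bound hvsh hvlip h0r hrle le_rfl h0r' hrle' le_rfl
    rw [hr1, hr1'] at h
    simpa using h
  have h2 : ε * |m - m'| ≤ |α - α'| + |r - r'| := by
    have h := cutL_bound hvsh hvlip h0m hmrle hrle h0m' hmrle' hrle'
    rw [hmr, hmr'] at h
    exact h
  have h3 : 2 * ε * |ℓ - ℓ'| ≤ |m - m'| := by
    have h := balance_bound hush hulip le_rfl h0l hlm hm1 le_rfl h0l' hlm' hm1' hbal hbal'
    rw [sub_self, abs_zero, zero_add] at h
    exact h
  have hΔ : 0 ≤ |α - α'| := abs_nonneg _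
  have ha : 0 ≤ |ℓ - ℓ'| := abs_nonneg _
  have hb : 0 ≤ |m - m'| := abs_nonneg _
  have hc : 0 ≤ |r - r'| := abs_nonneg _
  rw [div_mul_eq_mul_div, le_div_iff₀ (by positivity : (0:ℝ) < ε ^ 3)]
  nlinarith [mul_le_mul_of_nonneg_left h1 (sq_nonneg ε),
    mul_le_mul_of_nonneg_left h2 (sq_nonneg ε),
    mul_le_mul_of_nonneg_left h3 (sq_nonneg ε),
    mul_le_mul_of_nonneg_left h1 (mul_nonneg hε0.le hε0.le),
    mul_nonneg hε0.le hΔ, mul_nonneg (mul_nonneg hε0.le hε0.le) hΔ,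
    mul_nonneg hε0.le hc, mul_nonneg (mul_nonneg hε0.le hε0.le) hc,
    sq_nonneg ε, mul_pos hε0 hε0]

lemma bd23 (hε0 : 0 < ε) (hε1 : ε ≤ 1) (hvsh : StronglyHungry ε v)
    (hvlip : LipschitzVal 1 v) (hush : StronglyHungry ε u) (hulip : LipschitzVal 1 u)
    {α α' ℓ m r ℓ' m' r' : ℝ}
    (hd : IsDiv ℓ m r) (hd' : IsDiv ℓ' m' r')
    (hbal : u m r = u r 1) (h0l : v 0 ℓ = α) (hlm : v ℓ m = α)
    (hbal' : u m' r' = u r' 1) (h0l' : v 0 ℓ' = α') (hlm' : v ℓ' m' = α') :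
    |ℓ - ℓ'| + |m - m'| + |r - r'| ≤ 6 / ε ^ 3 * |α - α'| := by
  obtain ⟨hl0, hlmle, hmrle, hrle⟩ := hd
  obtain ⟨hl0', hlmle', hmrle', hrle'⟩ := hd'
  have h0m : 0 ≤ m := le_trans hl0 hlmle
  have h0m' : 0 ≤ m' := le_trans hl0' hlmle'
  have hm1 : m ≤ 1 := le_trans hmrle hrle
  have hm1' : m' ≤ 1 := le_trans hmrle' hrle'
  have hl1 : ℓ ≤ 1 := le_trans hlmle hm1
  have hl1' : ℓ' ≤ 1 := le_trans hlmle' hm1'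
  have h1 : ε * |ℓ - ℓ'| ≤ |α - α'| := by
    have h := cutR_bound hvsh hvlip le_rfl hl0 hl1 le_rfl hl0' hl1'
    rw [h0l, h0l'] at h
    simpa using h
  have h2 : ε * |m - m'| ≤ |α - α'| + |ℓ - ℓ'| := by
    have h := cutR_bound hvsh hvlip hl0 hlmle hm1 hl0' hlmle' hm1'
    rw [hlm, hlm'] at h
    exact h
  have h3 : 2 * ε * |r - r'| ≤ |m - m'| := by
    have h := balance_bound hush hulip h0m hmrle hrle le_rfl h0m' hmrle' hrle' le_rfl
      hbal hbal'
    rw [sub_self, abs_zero, add_zero] at h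
    exact h
  have hΔ : 0 ≤ |α - α'| := abs_nonneg _
  have ha : 0 ≤ |ℓ - ℓ'| := abs_nonneg _
  have hb : 0 ≤ |m - m'| := abs_nonneg _
  have hc : 0 ≤ |r - r'| := abs_nonneg _
  rw [div_mul_eq_mul_div, le_div_iff₀ (by positivity : (0:ℝ) < ε ^ 3)]
  nlinarith [mul_le_mul_of_nonneg_left h1 (sq_nonneg ε),
    mul_le_mul_of_nonneg_left h2 (sq_nonneg ε),
    mul_le_mul_of_nonneg_left h3 (sq_nonneg ε),
    mul_le_mul_of_nonneg_left h1 (mul_nonneg hε0.le hε0.le),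
    mul_nonneg hε0.le hΔ, mul_nonneg (mul_nonneg hε0.le hε0.le) hΔ,
    mul_nonneg hε0.le ha, mul_nonneg (mul_nonneg hε0.le hε0.le) ha,
    sq_nonneg ε, mul_pos hε0 hε0]

lemma bd12 (hε0 : 0 < ε) (hε1 : ε ≤ 1) (hvsh : StronglyHungry ε v)
    (hvlip : LipschitzVal 1 v) (hush : StronglyHungry ε u) (hulip : LipschitzVal 1 u)
    {α α' ℓ m r ℓ' m' r' : ℝ}
    (hd : IsDiv ℓ m r) (hd' : IsDiv ℓ' m' r')
    (hbal : u ℓ m = u m r) (h0l : v 0 ℓ = α) (hr1 : v r 1 = α)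
    (hbal' : u ℓ' m' = u m' r') (h0l' : v 0 ℓ' = α') (hr1' : v r' 1 = α') :
    |ℓ - ℓ'| + |m - m'| + |r - r'| ≤ 6 / ε ^ 3 * |α - α'| := by
  obtain ⟨hl0, hlmle, hmrle, hrle⟩ := hd
  obtain ⟨hl0', hlmle', hmrle', hrle'⟩ := hd'
  have h0r : 0 ≤ r := le_trans hl0 (le_trans hlmle hmrle)
  have h0r' : 0 ≤ r' := le_trans hl0' (le_trans hlmle' hmrle')
  have hl1 : ℓ ≤ 1 := le_trans hlmle (le_trans hmrle hrle)
  have hl1' : ℓ' ≤ 1 := le_trans hlmle' (le_trans hmrle' hrle')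
  have h1 : ε * |ℓ - ℓ'| ≤ |α - α'| := by
    have h := cutR_bound hvsh hvlip le_rfl hl0 hl1 le_rfl hl0' hl1'
    rw [h0l, h0l'] at h
    simpa using h
  have h2 : ε * |r - r'| ≤ |α - α'| := by
    have h := cutL_bound hvsh hvlip h0r hrle le_rfl h0r' hrle' le_rfl
    rw [hr1, hr1'] at h
    simpa using h
  have h3 : 2 * ε * |m - m'| ≤ |ℓ - ℓ'| + |r - r'| := by
    exact balance_bound hush hulip hl0 hlmle hmrle hrle hl0' hlmle' hmrle' hrle'
      hbal hbal'
  have hΔ : 0 ≤ |α - α'| := abs_nonneg _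
  have ha : 0 ≤ |ℓ - ℓ'| := abs_nonneg _
  have hb : 0 ≤ |m - m'| := abs_nonneg _
  have hc : 0 ≤ |r - r'| := abs_nonneg _
  rw [div_mul_eq_mul_div, le_div_iff₀ (by positivity : (0:ℝ) < ε ^ 3)]
  nlinarith [mul_le_mul_of_nonneg_left h1 (sq_nonneg ε),
    mul_le_mul_of_nonneg_left h2 (sq_nonneg ε),
    mul_le_mul_of_nonneg_left h3 (sq_nonneg ε),
    mul_le_mul_of_nonneg_left h1 (mul_nonneg hε0.le hε0.le),
    mul_le_mul_of_nonneg_left h2 (mul_nonneg hε0.le hε0.le),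
    mul_nonneg hε0.le hΔ, mul_nonneg (mul_nonneg hε0.le hε0.le) hΔ,
    mul_nonneg hε0.le ha, mul_nonneg (mul_nonneg hε0.le hε0.le) ha,
    mul_nonneg hε0.le hc, mul_nonneg (mul_nonneg hε0.le hε0.le) hc,
    sq_nonneg ε, mul_pos hε0 hε0]

lemma bd02aux (hε0 : 0 < ε) (hε1 : ε ≤ 1) (hvsh : StronglyHungry ε v)
    (hvlip : LipschitzVal 1 v) (hush : StronglyHungry ε u) (hulip : LipschitzVal 1 u)
    {α α' ℓ m r ℓ' m' r' : ℝ}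
    (hd : IsDiv ℓ m r) (hd' : IsDiv ℓ' m' r')
    (hbal : u 0 ℓ = u m r) (hlm : v ℓ m = α) (hr1 : v r 1 = α)
    (hbal' : u 0 ℓ' = u m' r') (hlm' : v ℓ' m' = α') (hr1' : v r' 1 = α')
    (hll : ℓ' ≤ ℓ) :
    |ℓ - ℓ'| + |m - m'| + |r - r'| ≤ 6 / ε ^ 3 * |α - α'| := by
  obtain ⟨hl0, hlmle, hmrle, hrle⟩ := hd
  obtain ⟨hl0', hlmle', hmrle', hrle'⟩ := hd'
  have h0m : 0 ≤ m := le_trans hl0 hlmle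
  have h0m' : 0 ≤ m' := le_trans hl0' hlmle'
  have h0r : 0 ≤ r := le_trans h0m hmrle
  have h0r' : 0 ≤ r' := le_trans h0m' hmrle'
  have hm1 : m ≤ 1 := le_trans hmrle hrle
  have hm1' : m' ≤ 1 := le_trans hmrle' hrle'
  have hl1 : ℓ ≤ 1 := le_trans hlmle hm1
  have hΔ : 0 ≤ |α - α'| := abs_nonneg _
  have hd1 : α' - α ≤ |α - α'| := by
    have := neg_abs_le (α - α'); linarith
  have hd2 : α - α' ≤ |α - α'| := le_abs_self _
  have h1 : ε * |r - r'| ≤ |α - α'| := by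
    have h := cutL_bound hvsh hvlip h0r hrle le_rfl h0r' hrle' le_rfl
    rw [hr1, hr1'] at h
    simpa using h
  have hal : |ℓ - ℓ'| = ℓ - ℓ' := abs_of_nonneg (by linarith)
  have hcr : 0 ≤ |r - r'| := abs_nonneg _
  rw [div_mul_eq_mul_div, le_div_iff₀ (by positivity : (0:ℝ) < ε ^ 3)]
  rcases le_total m m' with hmm | hmm
  · have hsh := hvsh ℓ' ℓ m m' hl0' hll hlmle hmm hm1'
    rw [hlm, hlm'] at hsh
    have ham : |m - m'| = m' - m := by
      rw [abs_sub_comm]; exact abs_of_nonneg (by linarith)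
    rw [hal, ham]
    have hεΔ : ε * |α - α'| ≤ |α - α'| := mul_le_of_le_one_left hΔ hε1
    have g1 : ε * (ℓ - ℓ') ≤ |α - α'| := by
      have hb0 : 0 ≤ ε * (m' - m) := mul_nonneg hε0.le (by linarith)
      linarith
    have g2 : ε * (m' - m) ≤ |α - α'| := by
      have hb0 : 0 ≤ ε * (ℓ - ℓ') := mul_nonneg hε0.le (by linarith)
      linarith
    have t1 := mul_le_mul_of_nonneg_left g1 (sq_nonneg ε)
    have t2 := mul_le_mul_of_nonneg_left g2 (sq_nonneg ε)
    have t3 := mul_le_mul_of_nonneg_left h1 (sq_nonneg ε)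
    have t4 := mul_le_mul_of_nonneg_left hεΔ hε0.le
    linarith [t1, t2, t3, t4, hεΔ]
  · have hA := hush 0 0 ℓ' ℓ le_rfl le_rfl hl0' hll hl1
    have hB := hush m' m r r h0m' hmm hmrle le_rfl hrle
    have hC : |u m' r - u m' r'| ≤ |m' - m'| + |r - r'| :=
      lip1 hulip ⟨h0m', hm1'⟩ ⟨h0r, hrle⟩ ⟨h0m', hm1'⟩ ⟨h0r', hrle'⟩
    rw [sub_self, abs_zero, zero_add] at hC
    have hC' : u m' r - u m' r' ≤ |r - r'| := le_trans (le_abs_self _) hC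
    have key : ε * (ℓ - ℓ') + ε * (m - m') ≤ |r - r'| := by
      linarith [hbal, hbal']
    have ham : |m - m'| = m - m' := abs_of_nonneg (by linarith)
    rw [hal, ham]
    have hεΔ : ε * |α - α'| ≤ |α - α'| := mul_le_of_le_one_left hΔ hε1
    have t1 := mul_le_mul_of_nonneg_left key (sq_nonneg ε)
    have t2 := mul_le_mul_of_nonneg_left h1 hε0.le
    have t3 := mul_le_mul_of_nonneg_left h1 (sq_nonneg ε)
    have t4 := mul_le_mul_of_nonneg_left hεΔ hε0.le
    linarith [t1, t2, t3, t4, hεΔ]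

lemma bd02 (hε0 : 0 < ε) (hε1 : ε ≤ 1) (hvsh : StronglyHungry ε v)
    (hvlip : LipschitzVal 1 v) (hush : StronglyHungry ε u) (hulip : LipschitzVal 1 u)
    {α α' ℓ m r ℓ' m' r' : ℝ}
    (hd : IsDiv ℓ m r) (hd' : IsDiv ℓ' m' r')
    (hbal : u 0 ℓ = u m r) (hlm : v ℓ m = α) (hr1 : v r 1 = α)
    (hbal' : u 0 ℓ' = u m' r') (hlm' : v ℓ' m' = α') (hr1' : v r' 1 = α') :
    |ℓ - ℓ'| + |m - m'| + |r - r'| ≤ 6 / ε ^ 3 * |α - α'| := by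
  rcases le_total ℓ' ℓ with h | h
  · exact bd02aux hε0 hε1 hvsh hvlip hush hulip hd hd' hbal hlm hr1 hbal' hlm' hr1' h
  · have h0 := bd02aux hε0 hε1 hvsh hvlip hush hulip hd' hd hbal' hlm' hr1' hbal hlm hr1 h
    rw [abs_sub_comm ℓ' ℓ, abs_sub_comm m' m, abs_sub_comm r' r, abs_sub_comm α' α] at h0
    exact h0

lemma bd13aux (hε0 : 0 < ε) (hε1 : ε ≤ 1) (hvsh : StronglyHungry ε v)
    (hvlip : LipschitzVal 1 v) (hush : StronglyHungry ε u) (hulip : LipschitzVal 1 u)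
    {α α' ℓ m r ℓ' m' r' : ℝ}
    (hd : IsDiv ℓ m r) (hd' : IsDiv ℓ' m' r')
    (hbal : u ℓ m = u r 1) (h0l : v 0 ℓ = α) (hmr : v m r = α)
    (hbal' : u ℓ' m' = u r' 1) (h0l' : v 0 ℓ' = α') (hmr' : v m' r' = α')
    (hmm : m' ≤ m) :
    |ℓ - ℓ'| + |m - m'| + |r - r'| ≤ 6 / ε ^ 3 * |α - α'| := by
  obtain ⟨hl0, hlmle, hmrle, hrle⟩ := hd
  obtain ⟨hl0', hlmle', hmrle', hrle'⟩ := hd'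
  have h0m : 0 ≤ m := le_trans hl0 hlmle
  have h0m' : 0 ≤ m' := le_trans hl0' hlmle'
  have h0r : 0 ≤ r := le_trans h0m hmrle
  have h0r' : 0 ≤ r' := le_trans h0m' hmrle'
  have hm1 : m ≤ 1 := le_trans hmrle hrle
  have hm1' : m' ≤ 1 := le_trans hmrle' hrle'
  have hl1 : ℓ ≤ 1 := le_trans hlmle hm1
  have hl1' : ℓ' ≤ 1 := le_trans hlmle' hm1'
  have hΔ : 0 ≤ |α - α'| := abs_nonneg _
  have hd1 : α' - α ≤ |α - α'| := by
    have := neg_abs_le (α - α'); linarith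
  have h1 : ε * |ℓ - ℓ'| ≤ |α - α'| := by
    have h := cutR_bound hvsh hvlip le_rfl hl0 hl1 le_rfl hl0' hl1'
    rw [h0l, h0l'] at h
    simpa using h
  have ham : |m - m'| = m - m' := abs_of_nonneg (by linarith)
  have hab : 0 ≤ |ℓ - ℓ'| := abs_nonneg _
  rw [div_mul_eq_mul_div, le_div_iff₀ (by positivity : (0:ℝ) < ε ^ 3)]
  rcases le_total r r' with hrr | hrr
  · have hsh := hvsh m' m r r' h0m' hmm hmrle hrr hrle'
    rw [hmr, hmr'] at hsh
    have har : |r - r'| = r' - r := by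
      rw [abs_sub_comm]; exact abs_of_nonneg (by linarith)
    rw [ham, har]
    have hεΔ : ε * |α - α'| ≤ |α - α'| := mul_le_of_le_one_left hΔ hε1
    have g1 : ε * (m - m') ≤ |α - α'| := by
      have hb0 : 0 ≤ ε * (r' - r) := mul_nonneg hε0.le (by linarith)
      linarith
    have g2 : ε * (r' - r) ≤ |α - α'| := by
      have hb0 : 0 ≤ ε * (m - m') := mul_nonneg hε0.le (by linarith)
      linarith
    have t1 := mul_le_mul_of_nonneg_left g1 (sq_nonneg ε)
    have t2 := mul_le_mul_of_nonneg_left g2 (sq_nonneg ε)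
    have t3 := mul_le_mul_of_nonneg_left h1 (sq_nonneg ε)
    have t4 := mul_le_mul_of_nonneg_left hεΔ hε0.le
    linarith [t1, t2, t3, t4, hεΔ]
  · have hA := hush ℓ' ℓ' m' m hl0' le_rfl hlmle' hmm hm1
    have hB : |u ℓ m - u ℓ' m| ≤ |ℓ - ℓ'| + |m - m| :=
      lip1 hulip ⟨hl0, hl1⟩ ⟨h0m, hm1⟩ ⟨hl0', hl1'⟩ ⟨h0m, hm1⟩
    rw [sub_self, abs_zero, add_zero] at hB
    have hB' : u ℓ' m - u ℓ m ≤ |ℓ - ℓ'| := by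
      have := neg_abs_le (u ℓ m - u ℓ' m); linarith
    have hC := hush r' r 1 1 h0r' hrr hrle le_rfl le_rfl
    have key : ε * (m - m') + ε * (r - r') ≤ |ℓ - ℓ'| := by
      linarith [hbal, hbal']
    have har : |r - r'| = r - r' := abs_of_nonneg (by linarith)
    rw [ham, har]
    have hεΔ : ε * |α - α'| ≤ |α - α'| := mul_le_of_le_one_left hΔ hε1
    have t1 := mul_le_mul_of_nonneg_left key (sq_nonneg ε)
    have t2 := mul_le_mul_of_nonneg_left h1 hε0.le
    have t3 := mul_le_mul_of_nonneg_left h1 (sq_nonneg ε)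
    have t4 := mul_le_mul_of_nonneg_left hεΔ hε0.le
    linarith [t1, t2, t3, t4, hεΔ]

lemma bd13 (hε0 : 0 < ε) (hε1 : ε ≤ 1) (hvsh : StronglyHungry ε v)
    (hvlip : LipschitzVal 1 v) (hush : StronglyHungry ε u) (hulip : LipschitzVal 1 u)
    {α α' ℓ m r ℓ' m' r' : ℝ}
    (hd : IsDiv ℓ m r) (hd' : IsDiv ℓ' m' r')
    (hbal : u ℓ m = u r 1) (h0l : v 0 ℓ = α) (hmr : v m r = α)
    (hbal' : u ℓ' m' = u r' 1) (h0l' : v 0 ℓ' = α') (hmr' : v m' r' = α') :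
    |ℓ - ℓ'| + |m - m'| + |r - r'| ≤ 6 / ε ^ 3 * |α - α'| := by
  rcases le_total m' m with h | h
  · exact bd13aux hε0 hε1 hvsh hvlip hush hulip hd hd' hbal h0l hmr hbal' h0l' hmr' h
  · have h0 := bd13aux hε0 hε1 hvsh hvlip hush hulip hd' hd hbal' h0l' hmr' hbal h0l hmr h
    rw [abs_sub_comm ℓ' ℓ, abs_sub_comm m' m, abs_sub_comm r' r, abs_sub_comm α' α] at h0
    exact h0

lemma bd03aux (hε0 : 0 < ε) (hε1 : ε ≤ 1) (hvsh : StronglyHungry ε v)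
    (hvlip : LipschitzVal 1 v) (hush : StronglyHungry ε u) (hulip : LipschitzVal 1 u)
    {α α' ℓ m r ℓ' m' r' : ℝ}
    (hd : IsDiv ℓ m r) (hd' : IsDiv ℓ' m' r')
    (hbal : u 0 ℓ = u r 1) (hlm : v ℓ m = α) (hmr : v m r = α)
    (hbal' : u 0 ℓ' = u r' 1) (hlm' : v ℓ' m' = α') (hmr' : v m' r' = α')
    (hll : ℓ' ≤ ℓ) :
    |ℓ - ℓ'| + |m - m'| + |r - r'| ≤ 6 / ε ^ 3 * |α - α'| := by
  obtain ⟨hl0, hlmle, hmrle, hrle⟩ := hd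
  obtain ⟨hl0', hlmle', hmrle', hrle'⟩ := hd'
  have h0m : 0 ≤ m := le_trans hl0 hlmle
  have h0m' : 0 ≤ m' := le_trans hl0' hlmle'
  have h0r : 0 ≤ r := le_trans h0m hmrle
  have h0r' : 0 ≤ r' := le_trans h0m' hmrle'
  have hm1 : m ≤ 1 := le_trans hmrle hrle
  have hm1' : m' ≤ 1 := le_trans hmrle' hrle'
  have hl1 : ℓ ≤ 1 := le_trans hlmle hm1
  have hΔ : 0 ≤ |α - α'| := abs_nonneg _
  have hd1 : α' - α ≤ |α - α'| := by
    have := neg_abs_le (α - α'); linarith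
  have hd2 : α - α' ≤ |α - α'| := le_abs_self _
  -- from the balance equations, with ℓ' ≤ ℓ we get r ≤ r'
  have hA := hush 0 0 ℓ' ℓ le_rfl le_rfl hl0' hll hl1
  have hrr : r ≤ r' := by
    by_contra hcon
    push_neg at hcon
    have hC := hush r' r 1 1 h0r' hcon.le hrle le_rfl le_rfl
    nlinarith [hbal, hbal']
  have hlipr : |u r 1 - u r' 1| ≤ |r - r'| + |(1:ℝ) - 1| :=
    lip1 hulip ⟨h0r, hrle⟩ ⟨zero_le_one, le_rfl⟩ ⟨h0r', hrle'⟩ ⟨zero_le_one, le_rfl⟩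
  rw [sub_self, abs_zero, add_zero] at hlipr
  have hlipl : |u 0 ℓ - u 0 ℓ'| ≤ |(0:ℝ) - 0| + |ℓ - ℓ'| :=
    lip1 hulip ⟨le_rfl, zero_le_one⟩ ⟨hl0, hl1⟩ ⟨le_rfl, zero_le_one⟩
      ⟨hl0', le_trans hll hl1⟩
  rw [sub_self, abs_zero, zero_add] at hlipl
  have hal : |ℓ - ℓ'| = ℓ - ℓ' := abs_of_nonneg (by linarith)
  have har : |r - r'| = r' - r := by
    rw [abs_sub_comm]; exact abs_of_nonneg (by linarith)
  -- f1 : ε (ℓ - ℓ') ≤ r' - r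
  have f1 : ε * (ℓ - ℓ') ≤ r' - r := by
    have h' : u r 1 - u r' 1 ≤ |r - r'| := le_trans (le_abs_self _) hlipr
    rw [har] at h'
    nlinarith [hbal, hbal']
  -- f2 : ε (r' - r) ≤ ℓ - ℓ'
  have f2 : ε * (r' - r) ≤ ℓ - ℓ' := by
    have hC := hush r r' 1 1 h0r hrr hrle' le_rfl le_rfl
    have h' : u 0 ℓ - u 0 ℓ' ≤ |ℓ - ℓ'| := le_trans (le_abs_self _) hlipl
    rw [hal] at h'
    nlinarith [hbal, hbal']
  rw [div_mul_eq_mul_div, le_div_iff₀ (by positivity : (0:ℝ) < ε ^ 3)]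
  rcases le_total m m' with hmm | hmm
  · have hsh := hvsh ℓ' ℓ m m' hl0' hll hlmle hmm hm1'
    rw [hlm, hlm'] at hsh
    have ham : |m - m'| = m' - m := by
      rw [abs_sub_comm]; exact abs_of_nonneg (by linarith)
    rw [hal, ham, har]
    have hεΔ : ε * |α - α'| ≤ |α - α'| := mul_le_of_le_one_left hΔ hε1
    have g1 : ε * (ℓ - ℓ') ≤ |α - α'| := by
      have hb0 : 0 ≤ ε * (m' - m) := mul_nonneg hε0.le (by linarith)
      linarith
    have g2 : ε * (m' - m) ≤ |α - α'| := by
      have hb0 : 0 ≤ ε * (ℓ - ℓ') := mul_nonneg hε0.le (by linarith)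
      linarith
    have t1 := mul_le_mul_of_nonneg_left g1 (sq_nonneg ε)
    have t2 := mul_le_mul_of_nonneg_left g2 (sq_nonneg ε)
    have t3 := mul_le_mul_of_nonneg_left f2 (sq_nonneg ε)
    have t4 := mul_le_mul_of_nonneg_left g1 hε0.le
    have t5 := mul_le_mul_of_nonneg_left hεΔ hε0.le
    linarith [t1, t2, t3, t4, t5, hεΔ]
  · have hsh := hvsh m' m r r' h0m' hmm hmrle hrr hrle'
    rw [hmr, hmr'] at hsh
    have ham : |m - m'| = m - m' := abs_of_nonneg (by linarith)
    rw [hal, ham, har]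
    have hεΔ : ε * |α - α'| ≤ |α - α'| := mul_le_of_le_one_left hΔ hε1
    have g1 : ε * (m - m') ≤ |α - α'| := by
      have hb0 : 0 ≤ ε * (r' - r) := mul_nonneg hε0.le (by linarith)
      linarith
    have g2 : ε * (r' - r) ≤ |α - α'| := by
      have hb0 : 0 ≤ ε * (m - m') := mul_nonneg hε0.le (by linarith)
      linarith
    have t1 := mul_le_mul_of_nonneg_left f1 (sq_nonneg ε)
    have t2 := mul_le_mul_of_nonneg_left g2 hε0.le
    have t3 := mul_le_mul_of_nonneg_left g1 (sq_nonneg ε)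
    have t4 := mul_le_mul_of_nonneg_left g2 (sq_nonneg ε)
    have t5 := mul_le_mul_of_nonneg_left hεΔ hε0.le
    linarith [t1, t2, t3, t4, t5, hεΔ]

lemma bd03 (hε0 : 0 < ε) (hε1 : ε ≤ 1) (hvsh : StronglyHungry ε v)
    (hvlip : LipschitzVal 1 v) (hush : StronglyHungry ε u) (hulip : LipschitzVal 1 u)
    {α α' ℓ m r ℓ' m' r' : ℝ}
    (hd : IsDiv ℓ m r) (hd' : IsDiv ℓ' m' r')
    (hbal : u 0 ℓ = u r 1) (hlm : v ℓ m = α) (hmr : v m r = α)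
    (hbal' : u 0 ℓ' = u r' 1) (hlm' : v ℓ' m' = α') (hmr' : v m' r' = α') :
    |ℓ - ℓ'| + |m - m'| + |r - r'| ≤ 6 / ε ^ 3 * |α - α'| := by
  rcases le_total ℓ' ℓ with h | h
  · exact bd03aux hε0 hε1 hvsh hvlip hush hulip hd hd' hbal hlm hmr hbal' hlm' hmr' h
  · have h0 := bd03aux hε0 hε1 hvsh hvlip hush hulip hd' hd hbal' hlm' hmr' hbal hlm hmr h
    rw [abs_sub_comm ℓ' ℓ, abs_sub_comm m' m, abs_sub_comm r' r, abs_sub_comm α' α] at h0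
    exact h0
end bounds

lemma iff01 (v u : ℝ → ℝ → ℝ) (α ℓ m r : ℝ) :
    (IsDiv ℓ m r ∧ pieceVal u ℓ m r 0 = pieceVal u ℓ m r 1 ∧
      (∀ t : Fin 4, t ≠ 0 → t ≠ 1 → pieceVal v ℓ m r t = α)) ↔
    (IsDiv ℓ m r ∧ u 0 ℓ = u ℓ m ∧ v m r = α ∧ v r 1 = α) := by
  constructor
  · rintro ⟨hd, he, ht⟩
    refine ⟨hd, ?_, ?_, ?_⟩
    · simpa [pieceVal] using he
    · simpa [pieceVal] using ht 2 (by decide) (by decide)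
    · simpa [pieceVal] using ht 3 (by decide) (by decide)
  · rintro ⟨hd, he, h1, h2⟩
    refine ⟨hd, by simpa [pieceVal] using he, ?_⟩
    intro t ht1 ht2
    fin_cases t <;> simp_all [pieceVal]

lemma iff02 (v u : ℝ → ℝ → ℝ) (α ℓ m r : ℝ) :
    (IsDiv ℓ m r ∧ pieceVal u ℓ m r 0 = pieceVal u ℓ m r 2 ∧
      (∀ t : Fin 4, t ≠ 0 → t ≠ 2 → pieceVal v ℓ m r t = α)) ↔
    (IsDiv ℓ m r ∧ u 0 ℓ = u m r ∧ v ℓ m = α ∧ v r 1 = α) := by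
  constructor
  · rintro ⟨hd, he, ht⟩
    refine ⟨hd, ?_, ?_, ?_⟩
    · simpa [pieceVal] using he
    · simpa [pieceVal] using ht 1 (by decide) (by decide)
    · simpa [pieceVal] using ht 3 (by decide) (by decide)
  · rintro ⟨hd, he, h1, h2⟩
    refine ⟨hd, by simpa [pieceVal] using he, ?_⟩
    intro t ht1 ht2
    fin_cases t <;> simp_all [pieceVal]

lemma iff03 (v u : ℝ → ℝ → ℝ) (α ℓ m r : ℝ) :
    (IsDiv ℓ m r ∧ pieceVal u ℓ m r 0 = pieceVal u ℓ m r 3 ∧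
      (∀ t : Fin 4, t ≠ 0 → t ≠ 3 → pieceVal v ℓ m r t = α)) ↔
    (IsDiv ℓ m r ∧ u 0 ℓ = u r 1 ∧ v ℓ m = α ∧ v m r = α) := by
  constructor
  · rintro ⟨hd, he, ht⟩
    refine ⟨hd, ?_, ?_, ?_⟩
    · simpa [pieceVal] using he
    · simpa [pieceVal] using ht 1 (by decide) (by decide)
    · simpa [pieceVal] using ht 2 (by decide) (by decide)
  · rintro ⟨hd, he, h1, h2⟩
    refine ⟨hd, by simpa [pieceVal] using he, ?_⟩
    intro t ht1 ht2
    fin_cases t <;> simp_all [pieceVal]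

lemma iff10 (v u : ℝ → ℝ → ℝ) (α ℓ m r : ℝ) :
    (IsDiv ℓ m r ∧ pieceVal u ℓ m r 1 = pieceVal u ℓ m r 0 ∧
      (∀ t : Fin 4, t ≠ 1 → t ≠ 0 → pieceVal v ℓ m r t = α)) ↔
    (IsDiv ℓ m r ∧ u 0 ℓ = u ℓ m ∧ v m r = α ∧ v r 1 = α) := by
  constructor
  · rintro ⟨hd, he, ht⟩
    refine ⟨hd, ?_, ?_, ?_⟩
    · simpa [pieceVal] using he.symm
    · simpa [pieceVal] using ht 2 (by decide) (by decide)
    · simpa [pieceVal] using ht 3 (by decide) (by decide)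
  · rintro ⟨hd, he, h1, h2⟩
    refine ⟨hd, by simpa [pieceVal] using he.symm, ?_⟩
    intro t ht1 ht2
    fin_cases t <;> simp_all [pieceVal]

lemma iff12 (v u : ℝ → ℝ → ℝ) (α ℓ m r : ℝ) :
    (IsDiv ℓ m r ∧ pieceVal u ℓ m r 1 = pieceVal u ℓ m r 2 ∧
      (∀ t : Fin 4, t ≠ 1 → t ≠ 2 → pieceVal v ℓ m r t = α)) ↔
    (IsDiv ℓ m r ∧ u ℓ m = u m r ∧ v 0 ℓ = α ∧ v r 1 = α) := by
  constructor
  · rintro ⟨hd, he, ht⟩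
    refine ⟨hd, ?_, ?_, ?_⟩
    · simpa [pieceVal] using he
    · simpa [pieceVal] using ht 0 (by decide) (by decide)
    · simpa [pieceVal] using ht 3 (by decide) (by decide)
  · rintro ⟨hd, he, h1, h2⟩
    refine ⟨hd, by simpa [pieceVal] using he, ?_⟩
    intro t ht1 ht2
    fin_cases t <;> simp_all [pieceVal]

lemma iff13 (v u : ℝ → ℝ → ℝ) (α ℓ m r : ℝ) :
    (IsDiv ℓ m r ∧ pieceVal u ℓ m r 1 = pieceVal u ℓ m r 3 ∧
      (∀ t : Fin 4, t ≠ 1 → t ≠ 3 → pieceVal v ℓ m r t = α)) ↔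
    (IsDiv ℓ m r ∧ u ℓ m = u r 1 ∧ v 0 ℓ = α ∧ v m r = α) := by
  constructor
  · rintro ⟨hd, he, ht⟩
    refine ⟨hd, ?_, ?_, ?_⟩
    · simpa [pieceVal] using he
    · simpa [pieceVal] using ht 0 (by decide) (by decide)
    · simpa [pieceVal] using ht 2 (by decide) (by decide)
  · rintro ⟨hd, he, h1, h2⟩
    refine ⟨hd, by simpa [pieceVal] using he, ?_⟩
    intro t ht1 ht2
    fin_cases t <;> simp_all [pieceVal]

lemma iff20 (v u : ℝ → ℝ → ℝ) (α ℓ m r : ℝ) :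
    (IsDiv ℓ m r ∧ pieceVal u ℓ m r 2 = pieceVal u ℓ m r 0 ∧
      (∀ t : Fin 4, t ≠ 2 → t ≠ 0 → pieceVal v ℓ m r t = α)) ↔
    (IsDiv ℓ m r ∧ u 0 ℓ = u m r ∧ v ℓ m = α ∧ v r 1 = α) := by
  constructor
  · rintro ⟨hd, he, ht⟩
    refine ⟨hd, ?_, ?_, ?_⟩
    · simpa [pieceVal] using he.symm
    · simpa [pieceVal] using ht 1 (by decide) (by decide)
    · simpa [pieceVal] using ht 3 (by decide) (by decide)
  · rintro ⟨hd, he, h1, h2⟩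
    refine ⟨hd, by simpa [pieceVal] using he.symm, ?_⟩
    intro t ht1 ht2
    fin_cases t <;> simp_all [pieceVal]

lemma iff21 (v u : ℝ → ℝ → ℝ) (α ℓ m r : ℝ) :
    (IsDiv ℓ m r ∧ pieceVal u ℓ m r 2 = pieceVal u ℓ m r 1 ∧
      (∀ t : Fin 4, t ≠ 2 → t ≠ 1 → pieceVal v ℓ m r t = α)) ↔
    (IsDiv ℓ m r ∧ u ℓ m = u m r ∧ v 0 ℓ = α ∧ v r 1 = α) := by
  constructor
  · rintro ⟨hd, he, ht⟩
    refine ⟨hd, ?_, ?_, ?_⟩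
    · simpa [pieceVal] using he.symm
    · simpa [pieceVal] using ht 0 (by decide) (by decide)
    · simpa [pieceVal] using ht 3 (by decide) (by decide)
  · rintro ⟨hd, he, h1, h2⟩
    refine ⟨hd, by simpa [pieceVal] using he.symm, ?_⟩
    intro t ht1 ht2
    fin_cases t <;> simp_all [pieceVal]

lemma iff23 (v u : ℝ → ℝ → ℝ) (α ℓ m r : ℝ) :
    (IsDiv ℓ m r ∧ pieceVal u ℓ m r 2 = pieceVal u ℓ m r 3 ∧
      (∀ t : Fin 4, t ≠ 2 → t ≠ 3 → pieceVal v ℓ m r t = α)) ↔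
    (IsDiv ℓ m r ∧ u m r = u r 1 ∧ v 0 ℓ = α ∧ v ℓ m = α) := by
  constructor
  · rintro ⟨hd, he, ht⟩
    refine ⟨hd, ?_, ?_, ?_⟩
    · simpa [pieceVal] using he
    · simpa [pieceVal] using ht 0 (by decide) (by decide)
    · simpa [pieceVal] using ht 1 (by decide) (by decide)
  · rintro ⟨hd, he, h1, h2⟩
    refine ⟨hd, by simpa [pieceVal] using he, ?_⟩
    intro t ht1 ht2
    fin_cases t <;> simp_all [pieceVal]

lemma iff30 (v u : ℝ → ℝ → ℝ) (α ℓ m r : ℝ) :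
    (IsDiv ℓ m r ∧ pieceVal u ℓ m r 3 = pieceVal u ℓ m r 0 ∧
      (∀ t : Fin 4, t ≠ 3 → t ≠ 0 → pieceVal v ℓ m r t = α)) ↔
    (IsDiv ℓ m r ∧ u 0 ℓ = u r 1 ∧ v ℓ m = α ∧ v m r = α) := by
  constructor
  · rintro ⟨hd, he, ht⟩
    refine ⟨hd, ?_, ?_, ?_⟩
    · simpa [pieceVal] using he.symm
    · simpa [pieceVal] using ht 1 (by decide) (by decide)
    · simpa [pieceVal] using ht 2 (by decide) (by decide)
  · rintro ⟨hd, he, h1, h2⟩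
    refine ⟨hd, by simpa [pieceVal] using he.symm, ?_⟩
    intro t ht1 ht2
    fin_cases t <;> simp_all [pieceVal]

lemma iff31 (v u : ℝ → ℝ → ℝ) (α ℓ m r : ℝ) :
    (IsDiv ℓ m r ∧ pieceVal u ℓ m r 3 = pieceVal u ℓ m r 1 ∧
      (∀ t : Fin 4, t ≠ 3 → t ≠ 1 → pieceVal v ℓ m r t = α)) ↔
    (IsDiv ℓ m r ∧ u ℓ m = u r 1 ∧ v 0 ℓ = α ∧ v m r = α) := by
  constructor
  · rintro ⟨hd, he, ht⟩
    refine ⟨hd, ?_, ?_, ?_⟩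
    · simpa [pieceVal] using he.symm
    · simpa [pieceVal] using ht 0 (by decide) (by decide)
    · simpa [pieceVal] using ht 2 (by decide) (by decide)
  · rintro ⟨hd, he, h1, h2⟩
    refine ⟨hd, by simpa [pieceVal] using he.symm, ?_⟩
    intro t ht1 ht2
    fin_cases t <;> simp_all [pieceVal]

lemma iff32 (v u : ℝ → ℝ → ℝ) (α ℓ m r : ℝ) :
    (IsDiv ℓ m r ∧ pieceVal u ℓ m r 3 = pieceVal u ℓ m r 2 ∧
      (∀ t : Fin 4, t ≠ 3 → t ≠ 2 → pieceVal v ℓ m r t = α)) ↔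
    (IsDiv ℓ m r ∧ u m r = u r 1 ∧ v 0 ℓ = α ∧ v ℓ m = α) := by
  constructor
  · rintro ⟨hd, he, ht⟩
    refine ⟨hd, ?_, ?_, ?_⟩
    · simpa [pieceVal] using he.symm
    · simpa [pieceVal] using ht 0 (by decide) (by decide)
    · simpa [pieceVal] using ht 1 (by decide) (by decide)
  · rintro ⟨hd, he, h1, h2⟩
    refine ⟨hd, by simpa [pieceVal] using he.symm, ?_⟩
    intro t ht1 ht2
    fin_cases t <;> simp_all [pieceVal]

/-- the trail `γ_{i,k,k'}^B` is well-defined (existence and uniqueness of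
the division where valuation `u` is indifferent between pieces `k` and `k'` and `v₁` values
the two remaining pieces exactly `α`) on `[α₄, α₂]`, and it is `6/ε³`-Lipschitz in the
`ℓ₁`-norm. -/
theorem trailB_wellDefined_and_lipschitz (ε : ℝ) (hε0 : 0 < ε) (hε1 : ε ≤ 1)
    (v u : ℝ → ℝ → ℝ)
    (hvval : IsValuation v) (hvlip : LipschitzVal 1 v) (hvsh : StronglyHungry ε v)
    (huval : IsValuation u) (hulip : LipschitzVal 1 u) (hush : StronglyHungry ε u)
    (α₂ α₄ : ℝ)
    (c₂ : ℝ) (h₂ : 0 ≤ c₂ ∧ c₂ ≤ 1 ∧ v 0 c₂ = α₂ ∧ v c₂ 1 = α₂)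
    (l₄ m₄ r₄ : ℝ) (h₄ : IsDiv l₄ m₄ r₄ ∧
      v 0 l₄ = α₄ ∧ v l₄ m₄ = α₄ ∧ v m₄ r₄ = α₄ ∧ v r₄ 1 = α₄)
    (k k' : Fin 4) (hkk' : k ≠ k') :
    ∃ γ : ℝ → ℝ × ℝ × ℝ,
      (∀ α ∈ Icc α₄ α₂, ∀ ℓ m r : ℝ,
        ((ℓ, m, r) = γ α ↔
          (IsDiv ℓ m r ∧ pieceVal u ℓ m r k = pieceVal u ℓ m r k' ∧
            ∀ t, t ≠ k → t ≠ k' → pieceVal v ℓ m r t = α))) ∧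
      (∀ α ∈ Icc α₄ α₂, ∀ α' ∈ Icc α₄ α₂,
        |(γ α).1 - (γ α').1| + |(γ α).2.1 - (γ α').2.1| + |(γ α).2.2 - (γ α').2.2|
          ≤ 6 / ε ^ 3 * |α - α'|) := by
  obtain ⟨hc20, hc21, hcL2, hcR2⟩ := h₂
  obtain ⟨hdiv4, h4a, _h4b, _h4c, _h4d⟩ := h₄
  have hl4I : l₄ ∈ Icc (0:ℝ) 1 :=
    ⟨hdiv4.1, le_trans hdiv4.2.1 (le_trans hdiv4.2.2.1 hdiv4.2.2.2)⟩
  have hα40 : 0 ≤ α₄ := by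
    rw [← h4a]; exact val_nonneg hvval ⟨le_rfl, zero_le_one⟩ hl4I
  fin_cases k <;> fin_cases k'
  · exact absurd rfl hkk'
  · -- case k = 0, k' = 1
    apply assemble (6 / ε ^ 3)
    · intro α hα
      obtain ⟨ℓ, m, r, hd, hb, h1, h2⟩ := ex01 hε0 hvval hvlip hvsh huval hulip
        hc20 hc21 hcL2 hcR2 (le_trans hα40 hα.1) hα.2
      exact ⟨ℓ, m, r, (iff01 v u α ℓ m r).mpr ⟨hd, hb, h1, h2⟩⟩
    · intro α hα α' hα' ℓ m r ℓ' m' r' hQ hQ'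
      obtain ⟨hd, hb, h1, h2⟩ := (iff01 v u α ℓ m r).mp hQ
      obtain ⟨hd', hb', h1', h2'⟩ := (iff01 v u α' ℓ' m' r').mp hQ'
      exact bd01 hε0 hε1 hvsh hvlip hush hulip hd hd' hb h1 h2 hb' h1' h2' 
  · -- case k = 0, k' = 2
    apply assemble (6 / ε ^ 3)
    · intro α hα
      obtain ⟨ℓ, m, r, hd, hb, h1, h2⟩ := ex02 hε0 hvval hvlip hvsh huval hulip
        hc20 hc21 hcL2 hcR2 (le_trans hα40 hα.1) hα.2
      exact ⟨ℓ, m, r, (iff02 v u α ℓ m r).mpr ⟨hd, hb, h1, h2⟩⟩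
    · intro α hα α' hα' ℓ m r ℓ' m' r' hQ hQ'
      obtain ⟨hd, hb, h1, h2⟩ := (iff02 v u α ℓ m r).mp hQ
      obtain ⟨hd', hb', h1', h2'⟩ := (iff02 v u α' ℓ' m' r').mp hQ'
      exact bd02 hε0 hε1 hvsh hvlip hush hulip hd hd' hb h1 h2 hb' h1' h2' 
  · -- case k = 0, k' = 3
    apply assemble (6 / ε ^ 3)
    · intro α hα
      obtain ⟨ℓ, m, r, hd, hb, h1, h2⟩ := ex03 hε0 hvval hvlip hvsh huval hulip
        hc20 hc21 hcL2 hcR2 (le_trans hα40 hα.1) hα.2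
      exact ⟨ℓ, m, r, (iff03 v u α ℓ m r).mpr ⟨hd, hb, h1, h2⟩⟩
    · intro α hα α' hα' ℓ m r ℓ' m' r' hQ hQ'
      obtain ⟨hd, hb, h1, h2⟩ := (iff03 v u α ℓ m r).mp hQ
      obtain ⟨hd', hb', h1', h2'⟩ := (iff03 v u α' ℓ' m' r').mp hQ'
      exact bd03 hε0 hε1 hvsh hvlip hush hulip hd hd' hb h1 h2 hb' h1' h2' 
  · -- case k = 1, k' = 0
    apply assemble (6 / ε ^ 3)
    · intro α hα
      obtain ⟨ℓ, m, r, hd, hb, h1, h2⟩ := ex01 hε0 hvval hvlip hvsh huval hulip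
        hc20 hc21 hcL2 hcR2 (le_trans hα40 hα.1) hα.2
      exact ⟨ℓ, m, r, (iff10 v u α ℓ m r).mpr ⟨hd, hb, h1, h2⟩⟩
    · intro α hα α' hα' ℓ m r ℓ' m' r' hQ hQ'
      obtain ⟨hd, hb, h1, h2⟩ := (iff10 v u α ℓ m r).mp hQ
      obtain ⟨hd', hb', h1', h2'⟩ := (iff10 v u α' ℓ' m' r').mp hQ'
      exact bd01 hε0 hε1 hvsh hvlip hush hulip hd hd' hb h1 h2 hb' h1' h2' 
  · exact absurd rfl hkk'
  · -- case k = 1, k' = 2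
    apply assemble (6 / ε ^ 3)
    · intro α hα
      obtain ⟨ℓ, m, r, hd, hb, h1, h2⟩ := ex12 hε0 hvval hvlip hvsh huval hulip
        hc20 hc21 hcL2 hcR2 (le_trans hα40 hα.1) hα.2
      exact ⟨ℓ, m, r, (iff12 v u α ℓ m r).mpr ⟨hd, hb, h1, h2⟩⟩
    · intro α hα α' hα' ℓ m r ℓ' m' r' hQ hQ'
      obtain ⟨hd, hb, h1, h2⟩ := (iff12 v u α ℓ m r).mp hQ
      obtain ⟨hd', hb', h1', h2'⟩ := (iff12 v u α' ℓ' m' r').mp hQ'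
      exact bd12 hε0 hε1 hvsh hvlip hush hulip hd hd' hb h1 h2 hb' h1' h2' 
  · -- case k = 1, k' = 3
    apply assemble (6 / ε ^ 3)
    · intro α hα
      obtain ⟨ℓ, m, r, hd, hb, h1, h2⟩ := ex13 hε0 hvval hvlip hvsh huval hulip
        hc20 hc21 hcL2 hcR2 (le_trans hα40 hα.1) hα.2
      exact ⟨ℓ, m, r, (iff13 v u α ℓ m r).mpr ⟨hd, hb, h1, h2⟩⟩
    · intro α hα α' hα' ℓ m r ℓ' m' r' hQ hQ'
      obtain ⟨hd, hb, h1, h2⟩ := (iff13 v u α ℓ m r).mp hQ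
      obtain ⟨hd', hb', h1', h2'⟩ := (iff13 v u α' ℓ' m' r').mp hQ'
      exact bd13 hε0 hε1 hvsh hvlip hush hulip hd hd' hb h1 h2 hb' h1' h2' 
  · -- case k = 2, k' = 0
    apply assemble (6 / ε ^ 3)
    · intro α hα
      obtain ⟨ℓ, m, r, hd, hb, h1, h2⟩ := ex02 hε0 hvval hvlip hvsh huval hulip
        hc20 hc21 hcL2 hcR2 (le_trans hα40 hα.1) hα.2
      exact ⟨ℓ, m, r, (iff20 v u α ℓ m r).mpr ⟨hd, hb, h1, h2⟩⟩
    · intro α hα α' hα' ℓ m r ℓ' m' r' hQ hQ'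
      obtain ⟨hd, hb, h1, h2⟩ := (iff20 v u α ℓ m r).mp hQ
      obtain ⟨hd', hb', h1', h2'⟩ := (iff20 v u α' ℓ' m' r').mp hQ'
      exact bd02 hε0 hε1 hvsh hvlip hush hulip hd hd' hb h1 h2 hb' h1' h2' 
  · -- case k = 2, k' = 1
    apply assemble (6 / ε ^ 3)
    · intro α hα
      obtain ⟨ℓ, m, r, hd, hb, h1, h2⟩ := ex12 hε0 hvval hvlip hvsh huval hulip
        hc20 hc21 hcL2 hcR2 (le_trans hα40 hα.1) hα.2
      exact ⟨ℓ, m, r, (iff21 v u α ℓ m r).mpr ⟨hd, hb, h1, h2⟩⟩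
    · intro α hα α' hα' ℓ m r ℓ' m' r' hQ hQ'
      obtain ⟨hd, hb, h1, h2⟩ := (iff21 v u α ℓ m r).mp hQ
      obtain ⟨hd', hb', h1', h2'⟩ := (iff21 v u α' ℓ' m' r').mp hQ'
      exact bd12 hε0 hε1 hvsh hvlip hush hulip hd hd' hb h1 h2 hb' h1' h2' 
  · exact absurd rfl hkk'
  · -- case k = 2, k' = 3
    apply assemble (6 / ε ^ 3)
    · intro α hα
      obtain ⟨ℓ, m, r, hd, hb, h1, h2⟩ := ex23 hε0 hvval hvlip hvsh huval hulip
        hc20 hc21 hcL2 hcR2 (le_trans hα40 hα.1) hα.2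
      exact ⟨ℓ, m, r, (iff23 v u α ℓ m r).mpr ⟨hd, hb, h1, h2⟩⟩
    · intro α hα α' hα' ℓ m r ℓ' m' r' hQ hQ'
      obtain ⟨hd, hb, h1, h2⟩ := (iff23 v u α ℓ m r).mp hQ
      obtain ⟨hd', hb', h1', h2'⟩ := (iff23 v u α' ℓ' m' r').mp hQ'
      exact bd23 hε0 hε1 hvsh hvlip hush hulip hd hd' hb h1 h2 hb' h1' h2' 
  · -- case k = 3, k' = 0
    apply assemble (6 / ε ^ 3)
    · intro α hα
      obtain ⟨ℓ, m, r, hd, hb, h1, h2⟩ := ex03 hε0 hvval hvlip hvsh huval hulip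
        hc20 hc21 hcL2 hcR2 (le_trans hα40 hα.1) hα.2
      exact ⟨ℓ, m, r, (iff30 v u α ℓ m r).mpr ⟨hd, hb, h1, h2⟩⟩
    · intro α hα α' hα' ℓ m r ℓ' m' r' hQ hQ'
      obtain ⟨hd, hb, h1, h2⟩ := (iff30 v u α ℓ m r).mp hQ
      obtain ⟨hd', hb', h1', h2'⟩ := (iff30 v u α' ℓ' m' r').mp hQ'
      exact bd03 hε0 hε1 hvsh hvlip hush hulip hd hd' hb h1 h2 hb' h1' h2' 
  · -- case k = 3, k' = 1
    apply assemble (6 / ε ^ 3)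
    · intro α hα
      obtain ⟨ℓ, m, r, hd, hb, h1, h2⟩ := ex13 hε0 hvval hvlip hvsh huval hulip
        hc20 hc21 hcL2 hcR2 (le_trans hα40 hα.1) hα.2
      exact ⟨ℓ, m, r, (iff31 v u α ℓ m r).mpr ⟨hd, hb, h1, h2⟩⟩
    · intro α hα α' hα' ℓ m r ℓ' m' r' hQ hQ'
      obtain ⟨hd, hb, h1, h2⟩ := (iff31 v u α ℓ m r).mp hQ
      obtain ⟨hd', hb', h1', h2'⟩ := (iff31 v u α' ℓ' m' r').mp hQ'
      exact bd13 hε0 hε1 hvsh hvlip hush hulip hd hd' hb h1 h2 hb' h1' h2' 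
  · -- case k = 3, k' = 2
    apply assemble (6 / ε ^ 3)
    · intro α hα
      obtain ⟨ℓ, m, r, hd, hb, h1, h2⟩ := ex23 hε0 hvval hvlip hvsh huval hulip
        hc20 hc21 hcL2 hcR2 (le_trans hα40 hα.1) hα.2
      exact ⟨ℓ, m, r, (iff32 v u α ℓ m r).mpr ⟨hd, hb, h1, h2⟩⟩
    · intro α hα α' hα' ℓ m r ℓ' m' r' hQ hQ'
      obtain ⟨hd, hb, h1, h2⟩ := (iff32 v u α ℓ m r).mp hQ
      obtain ⟨hd', hb', h1', h2'⟩ := (iff32 v u α' ℓ' m' r').mp hQ'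
      exact bd23 hε0 hε1 hvsh hvlip hush hulip hd hd' hb h1 h2 hb' h1' h2' 
  · exact absurd rfl hkk'
end

section
/- Let v₁, u, u' be hungry valuation functions and let α > 0. Suppose (ℓ, m, r) and (ℓ', m', r') are divisions satisfying v₁(0,ℓ) = α, v₁(m,r) = α, u(ℓ,m) = u(r,1), and v₁(0,ℓ') = α, v₁(m',r') = α, u'(ℓ',m') = u'(r',1). If u'(ℓ,m) ≥ u'(r,1), then u(ℓ',m') ≤ u(r',1). (In the paper's terminology, with k the second piece and k' the fourth piece: if agent j' with valuation u' weakly prefers piece k to k' in the division where agent j with valuation u is indifferent between k and k', then agent j weakly prefers piece k' to k in the division where agent j' is indifferent between k and k'.) -/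
open Set

/-- structural observation: if agent `u'` weakly prefers the second piece
to the fourth in `u`'s indifference division, then `u` weakly prefers the fourth piece to
the second in `u'`'s indifference division. -/
theorem structural_observation (v₁ u u' : ℝ → ℝ → ℝ)
    (hv₁ : IsValuation v₁ ∧ HungryVal v₁)
    (hu : IsValuation u ∧ HungryVal u)
    (hu' : IsValuation u' ∧ HungryVal u')
    (α : ℝ) (hα : 0 < α)
    (ℓ m r ℓ' m' r' : ℝ) (hd : IsDiv ℓ m r) (hd' : IsDiv ℓ' m' r')
    (h1 : v₁ 0 ℓ = α) (h2 : v₁ m r = α) (h3 : u ℓ m = u r 1)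
    (h1' : v₁ 0 ℓ' = α) (h2' : v₁ m' r' = α) (h3' : u' ℓ' m' = u' r' 1)
    (hpref : u' r 1 ≤ u' ℓ m) :
    u ℓ' m' ≤ u r' 1 := by
  obtain ⟨hℓ0, hℓm, hmr, hr1⟩ := hd
  obtain ⟨hℓ0', hℓm', hmr', hr1'⟩ := hd'
  obtain ⟨v₁mono, v₁strict⟩ := hv₁.2
  obtain ⟨umono, ustrict⟩ := hu.2
  obtain ⟨u'mono, u'strict⟩ := hu'.2
  have hℓ1 : ℓ ≤ 1 := le_trans hℓm (le_trans hmr hr1)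
  have hℓ1' : ℓ' ≤ 1 := le_trans hℓm' (le_trans hmr' hr1')
  have hm0 : 0 ≤ m := le_trans hℓ0 hℓm
  have hm0' : 0 ≤ m' := le_trans hℓ0' hℓm'
  have hr0 : 0 ≤ r := le_trans hm0 hmr
  have hr0' : 0 ≤ r' := le_trans hm0' hmr'
  have heqℓ : ℓ = ℓ' := by
    rcases lt_trichotomy ℓ ℓ' with h | h | h
    · exfalso
      have := v₁strict 0 0 ℓ ℓ' le_rfl le_rfl hℓ0 h.le hℓ1'
        (fun hh => h.ne (congrArg Prod.snd hh))
      rw [h1, h1'] at this; exact lt_irrefl _ this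
    · exact h
    · exfalso
      have := v₁strict 0 0 ℓ' ℓ le_rfl le_rfl hℓ0' h.le hℓ1
        (fun hh => h.ne (congrArg Prod.snd hh))
      rw [h1, h1'] at this; exact lt_irrefl _ this
  rcases lt_trichotomy m m' with hm | hm | hm
  · exfalso
    have hrr : r < r' := by
      by_contra hrr
      push_neg at hrr
      have := v₁strict m m' r' r hm0 hm.le hmr' hrr hr1
        (fun hh => hm.ne' (congrArg Prod.fst hh))
      rw [h2, h2'] at this; exact lt_irrefl _ this
    have hA : u' ℓ m < u' ℓ' m' := by
      apply u'strict ℓ' ℓ m m' hℓ0' heqℓ.ge hℓm hm.le (le_trans hmr' hr1')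
      exact fun hh => hm.ne (congrArg Prod.snd hh)
    have hB : u' r' 1 < u' r 1 := by
      apply u'strict r r' 1 1 hr0 hrr.le hr1' le_rfl le_rfl
      exact fun hh => hrr.ne' (congrArg Prod.fst hh)
    rw [h3'] at hA
    exact absurd (lt_of_le_of_lt hpref hA) (not_lt.2 hB.le)
  · have hrr : r = r' := by
      rcases lt_trichotomy r r' with h | h | h
      · exfalso
        have := v₁strict m' m r r' hm0' hm.ge hmr h.le hr1'
          (fun hh => h.ne (congrArg Prod.snd hh))
        rw [h2, h2'] at this; exact lt_irrefl _ this
      · exact h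
      · exfalso
        have := v₁strict m m' r' r hm0 hm.le hmr' h.le hr1
          (fun hh => h.ne (congrArg Prod.snd hh))
        rw [h2, h2'] at this; exact lt_irrefl _ this
    rw [← heqℓ, ← hm, ← hrr, h3]
  · have hrr : r' < r := by
      by_contra hrr
      push_neg at hrr
      have := v₁strict m' m r r' hm0' hm.le hmr hrr hr1'
        (fun hh => hm.ne' (congrArg Prod.fst hh))
      rw [h2, h2'] at this; exact lt_irrefl _ this
    have hA : u ℓ' m' < u ℓ m := by
      apply ustrict ℓ ℓ' m' m hℓ0 heqℓ.le hℓm' hm.le (le_trans hmr hr1)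
      exact fun hh => hm.ne (congrArg Prod.snd hh)
    have hB : u r 1 < u r' 1 := by
      apply ustrict r' r 1 1 hr0' hrr.le hr1 le_rfl le_rfl
      exact fun hh => hrr.ne' (congrArg Prod.fst hh)
    rw [h3] at hA
    exact le_of_lt (lt_trans hA hB)
end

section
/- Let v₁ be a hungry valuation function and α > 0. Suppose the division (ℓ, m, r) satisfies v₁(0,ℓ) = α, v₁(m,r) = α, and v₁(ℓ,m) > α, and the division (ℓ', m', r') satisfies v₁(0,ℓ') = v₁(ℓ',m') = v₁(m',r') = α. Then ℓ' = ℓ, m' < m, and r' < r; in particular the second piece [ℓ',m'] of the second division is a strict subset of [ℓ,m], and the fourth piece [r',1] of the second division is a strict superset of [r,1]. -/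
open Set

/-- comparing a division where the second piece is strictly preferred
by Agent 1 with the division where Agent 1 is indifferent between the first three pieces. -/
theorem cut_comparison (v₁ : ℝ → ℝ → ℝ)
    (hval : IsValuation v₁) (hhungry : HungryVal v₁)
    (α : ℝ) (hα : 0 < α)
    (ℓ m r ℓ' m' r' : ℝ) (hd : IsDiv ℓ m r) (hd' : IsDiv ℓ' m' r')
    (h1 : v₁ 0 ℓ = α) (h2 : v₁ m r = α) (h3 : α < v₁ ℓ m)
    (h1' : v₁ 0 ℓ' = α) (h2' : v₁ ℓ' m' = α) (h3' : v₁ m' r' = α) :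
    ℓ' = ℓ ∧ m' < m ∧ r' < r ∧
      Icc ℓ' m' ⊂ Icc ℓ m ∧ Icc r 1 ⊂ Icc r' 1 := by
  obtain ⟨hl0, hlm, hmr, hr1⟩ := hd
  obtain ⟨hl0', hlm', hmr', hr1'⟩ := hd'
  obtain ⟨hmono, hstrict⟩ := hhungry
  have hl1 : ℓ ≤ 1 := hlm.trans (hmr.trans hr1)
  have hl1' : ℓ' ≤ 1 := hlm'.trans (hmr'.trans hr1')
  have hm1 : m ≤ 1 := hmr.trans hr1
  have hm1' : m' ≤ 1 := hmr'.trans hr1'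
  -- ℓ' = ℓ
  have hll : ℓ' = ℓ := by
    by_contra hne
    rcases lt_or_gt_of_ne hne with h | h
    · have := hstrict 0 0 ℓ' ℓ le_rfl le_rfl hl0' h.le hl1
        (by simp [Prod.ext_iff, h.ne])
      rw [h1, h1'] at this; exact lt_irrefl α this
    · have := hstrict 0 0 ℓ ℓ' le_rfl le_rfl hl0 h.le hl1'
        (by simp [Prod.ext_iff]; exact fun h' => absurd h'.symm h.ne')
      rw [h1, h1'] at this; exact lt_irrefl α this
  subst hll
  -- m' < m
  have hmm : m' < m := by
    by_contra hge
    push_neg at hge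
    have : v₁ ℓ' m ≤ v₁ ℓ' m' := hmono ℓ' ℓ' m m' hl0' le_rfl hlm hge hm1'
    rw [h2'] at this
    exact absurd (h3.trans_le this) (lt_irrefl α)
  refine ⟨rfl, hmm, ?_, ?_, ?_⟩
  · -- r' < r
    by_contra hge
    push_neg at hge
    have : v₁ m r < v₁ m' r' := hstrict m' m r r' (hl0'.trans hlm') hmm.le hmr hge hr1'
      (by simp [Prod.ext_iff]; exact fun h' _ => hmm.ne' h')
    rw [h2, h3'] at this; exact lt_irrefl α this
  · constructor
    · exact Icc_subset_Icc le_rfl hmm.le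
    · intro hsub
      exact absurd ((hsub ⟨hlm, le_rfl⟩).2) (not_le.mpr hmm)
  · have hrr : r' < r := by
      by_contra hge
      push_neg at hge
      have : v₁ m r < v₁ m' r' := hstrict m' m r r' (hl0'.trans hlm') hmm.le hmr hge hr1'
        (by simp [Prod.ext_iff]; exact fun h' _ => hmm.ne' h')
      rw [h2, h3'] at this; exact lt_irrefl α this
    constructor
    · exact Icc_subset_Icc hrr.le le_rfl
    · intro hsub
      exact absurd ((hsub ⟨le_rfl, hr1'⟩).1) (not_le.mpr hrr)
end

section
/- Let v₁ be a hungry valuation function, let k ∈ {1,2,3,4}, and let 0 < α < α'. Suppose (ℓ, m, r) and (ℓ', m', r') are divisions such that v₁(P_t) = α for all piece indices t ≠ k in the first division and v₁(P'_t) = α' for all piece indices t ≠ k in the second division. Then piece k of the second division is a strict subset of piece k of the first division: P'_k ⊊ P_k. (Moving along the trail γ_k^A monotonically shrinks piece k.) -/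
open Set

/-- The four pieces `[0,ℓ], [ℓ,m], [m,r], [r,1]` as sets. -/
def pieceSet (ℓ m r : ℝ) : Fin 4 → Set ℝ :=
  ![Icc 0 ℓ, Icc ℓ m, Icc m r, Icc r 1]

lemma mono_lt_aux {v : ℝ → ℝ → ℝ} (hm : MonotoneVal v) {a b a' b' : ℝ}
    (h0 : 0 ≤ a) (hb1 : b ≤ 1) (ha'b' : a' ≤ b')
    (hlt : v a b < v a' b') : a' < a ∨ b < b' := by
  by_contra h
  push_neg at h
  exact absurd (hm a a' b' b h0 h.1 ha'b' h.2 hb1) (not_le.mpr hlt)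

lemma Icc_ssub {a b a' b' : ℝ} (ha : a ≤ a') (hb : b' ≤ b) (hab : a ≤ b)
    (hstrict : a < a' ∨ b' < b) : Icc a' b' ⊂ Icc a b := by
  refine ⟨Icc_subset_Icc ha hb, fun hsub => ?_⟩
  rcases hstrict with h | h
  · have := hsub ⟨le_refl a, hab⟩
    exact absurd this.1 (not_le.mpr h)
  · have := hsub ⟨hab, le_refl b⟩
    exact absurd this.2 (not_le.mpr h)

/-- moving along the trail `γ_k^A` (increasing `α`) strictly shrinks
piece `k`. -/
theorem trailA_shrinks_piece_k (v : ℝ → ℝ → ℝ)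
    (hval : IsValuation v) (hhungry : HungryVal v)
    (k : Fin 4) (α α' : ℝ) (hα : 0 < α) (hαα' : α < α')
    (ℓ m r ℓ' m' r' : ℝ) (hd : IsDiv ℓ m r) (hd' : IsDiv ℓ' m' r')
    (hfirst : ∀ t, t ≠ k → pieceVal v ℓ m r t = α)
    (hsecond : ∀ t, t ≠ k → pieceVal v ℓ' m' r' t = α') :
    pieceSet ℓ' m' r' k ⊂ pieceSet ℓ m r k := by
  obtain ⟨hℓ0, hℓm, hmr, hr1⟩ := hd
  obtain ⟨hℓ0', hℓm', hmr', hr1'⟩ := hd'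
  have hm := hhungry.1
  fin_cases k
  · -- k = 0
    have h3 : v r 1 < v r' 1 := by
      exact lt_of_eq_of_lt (hfirst 3 (by decide)) (lt_of_lt_of_eq hαα' (hsecond 3 (by decide)).symm)
    have h2 : v m r < v m' r' := by
      exact lt_of_eq_of_lt (hfirst 2 (by decide)) (lt_of_lt_of_eq hαα' (hsecond 2 (by decide)).symm)
    have h1 : v ℓ m < v ℓ' m' := by
      exact lt_of_eq_of_lt (hfirst 1 (by decide)) (lt_of_lt_of_eq hαα' (hsecond 1 (by decide)).symm)
    have hr : r' < r := by
      rcases mono_lt_aux hm (by linarith) le_rfl hr1' h3 with h | h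
      · exact h
      · linarith
    have hmm : m' < m := by
      rcases mono_lt_aux hm (by linarith) hr1 hmr' h2 with h | h
      · exact h
      · linarith
    have hℓℓ : ℓ' < ℓ := by
      rcases mono_lt_aux hm hℓ0 (by linarith) hℓm' h1 with h | h
      · exact h
      · linarith
    exact Icc_ssub le_rfl hℓℓ.le hℓ0 (Or.inr hℓℓ)
  · -- k = 1
    have h0 : v 0 ℓ < v 0 ℓ' := by
      exact lt_of_eq_of_lt (hfirst 0 (by decide)) (lt_of_lt_of_eq hαα' (hsecond 0 (by decide)).symm)
    have h3 : v r 1 < v r' 1 := by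
      exact lt_of_eq_of_lt (hfirst 3 (by decide)) (lt_of_lt_of_eq hαα' (hsecond 3 (by decide)).symm)
    have h2 : v m r < v m' r' := by
      exact lt_of_eq_of_lt (hfirst 2 (by decide)) (lt_of_lt_of_eq hαα' (hsecond 2 (by decide)).symm)
    have hℓℓ : ℓ < ℓ' := by
      rcases mono_lt_aux hm le_rfl (by linarith) hℓ0' h0 with h | h
      · linarith
      · exact h
    have hr : r' < r := by
      rcases mono_lt_aux hm (by linarith) le_rfl hr1' h3 with h | h
      · exact h
      · linarith
    have hmm : m' < m := by
      rcases mono_lt_aux hm (by linarith) hr1 hmr' h2 with h | h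
      · exact h
      · linarith
    exact Icc_ssub hℓℓ.le hmm.le hℓm (Or.inl hℓℓ)
  · -- k = 2
    have h0 : v 0 ℓ < v 0 ℓ' := by
      exact lt_of_eq_of_lt (hfirst 0 (by decide)) (lt_of_lt_of_eq hαα' (hsecond 0 (by decide)).symm)
    have h1 : v ℓ m < v ℓ' m' := by
      exact lt_of_eq_of_lt (hfirst 1 (by decide)) (lt_of_lt_of_eq hαα' (hsecond 1 (by decide)).symm)
    have h3 : v r 1 < v r' 1 := by
      exact lt_of_eq_of_lt (hfirst 3 (by decide)) (lt_of_lt_of_eq hαα' (hsecond 3 (by decide)).symm)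
    have hℓℓ : ℓ < ℓ' := by
      rcases mono_lt_aux hm le_rfl (by linarith) hℓ0' h0 with h | h
      · linarith
      · exact h
    have hmm : m < m' := by
      rcases mono_lt_aux hm hℓ0 (by linarith) hℓm' h1 with h | h
      · linarith
      · exact h
    have hr : r' < r := by
      rcases mono_lt_aux hm (by linarith) le_rfl hr1' h3 with h | h
      · exact h
      · linarith
    exact Icc_ssub hmm.le hr.le hmr (Or.inl hmm)
  · -- k = 3
    have h0 : v 0 ℓ < v 0 ℓ' := by
      exact lt_of_eq_of_lt (hfirst 0 (by decide)) (lt_of_lt_of_eq hαα' (hsecond 0 (by decide)).symm)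
    have h1 : v ℓ m < v ℓ' m' := by
      exact lt_of_eq_of_lt (hfirst 1 (by decide)) (lt_of_lt_of_eq hαα' (hsecond 1 (by decide)).symm)
    have h2 : v m r < v m' r' := by
      exact lt_of_eq_of_lt (hfirst 2 (by decide)) (lt_of_lt_of_eq hαα' (hsecond 2 (by decide)).symm)
    have hℓℓ : ℓ < ℓ' := by
      rcases mono_lt_aux hm le_rfl (by linarith) hℓ0' h0 with h | h
      · linarith
      · exact h
    have hmm : m < m' := by
      rcases mono_lt_aux hm hℓ0 (by linarith) hℓm' h1 with h | h
      · linarith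
      · exact h
    have hr : r < r' := by
      rcases mono_lt_aux hm (by linarith) hr1 hmr' h2 with h | h
      · linarith
      · exact h
    exact Icc_ssub hr.le le_rfl hr1 (Or.inl hr)
end

section
/- Let v₁, v₂, v₃, v₄ be valuation functions and let (ℓ, m, r) be a division of the cake at which Agent 1 is indifferent between all four pieces: v₁(P₁) = v₁(P₂) = v₁(P₃) = v₁(P₄) = α. If this division admits no envy-free assignment (i.e., there is no bijection π from the four agents to the four pieces with v_i(P_{π(i)}) ≥ v_i(P_j) for all i, j), then there exist a piece index k and two distinct agents i, i' ∈ {2,3,4} such that v_i(P_k) ≥ max_t v_i(P_t) and v_{i'}(P_k) ≥ max_t v_{i'}(P_t); that is, the division satisfies Condition A at value α. -/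
open Set

/-- Condition A at value `α` (agent `0` is "Agent 1"). -/
def CondA (v : Fin 4 → ℝ → ℝ → ℝ) (ℓ m r α : ℝ) : Prop :=
  ∃ k : Fin 4, (∀ t, t ≠ k → pieceVal (v 0) ℓ m r t = α) ∧ pieceVal (v 0) ℓ m r k ≤ α ∧
    ∃ i i' : Fin 4, i ≠ 0 ∧ i' ≠ 0 ∧ i ≠ i' ∧
      (∀ t, pieceVal (v i) ℓ m r t ≤ pieceVal (v i) ℓ m r k) ∧
      (∀ t, pieceVal (v i') ℓ m r t ≤ pieceVal (v i') ℓ m r k)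

/-- The division `(ℓ,m,r)` admits an envy-free assignment of the four pieces. -/
def EFdiv (v : Fin 4 → ℝ → ℝ → ℝ) (ℓ m r : ℝ) : Prop :=
  ∃ π : Equiv.Perm (Fin 4),
    ∀ i t : Fin 4, pieceVal (v i) ℓ m r t ≤ pieceVal (v i) ℓ m r (π i)

/-- if Agent 1's equipartition admits no envy-free assignment, then it
satisfies Condition A. -/
theorem condA_of_not_envyFree_equipartition (v : Fin 4 → ℝ → ℝ → ℝ)
    (hval : ∀ i, IsValuation (v i))
    (ℓ m r α : ℝ) (hd : IsDiv ℓ m r)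
    (heq : ∀ t : Fin 4, pieceVal (v 0) ℓ m r t = α)
    (hnoEF : ¬ EFdiv v ℓ m r) :
    CondA v ℓ m r α := by
  by_contra hA
  have hmax : ∀ i : Fin 4, ∃ k, ∀ t, pieceVal (v i) ℓ m r t ≤ pieceVal (v i) ℓ m r k := by
    intro i
    obtain ⟨k, -, hk⟩ := Finset.exists_max_image Finset.univ (pieceVal (v i) ℓ m r)
      ⟨0, Finset.mem_univ 0⟩
    exact ⟨k, fun t => hk t (Finset.mem_univ t)⟩
  obtain ⟨k1, h1⟩ := hmax 1
  obtain ⟨k2, h2⟩ := hmax 2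
  obtain ⟨k3, h3⟩ := hmax 3
  have key : ∀ (i i' : Fin 4) (k : Fin 4), i ≠ 0 → i' ≠ 0 → i ≠ i' →
      (∀ t, pieceVal (v i) ℓ m r t ≤ pieceVal (v i) ℓ m r k) →
      (∀ t, pieceVal (v i') ℓ m r t ≤ pieceVal (v i') ℓ m r k) → False :=
    fun i i' k hi hi' hii hk hk' =>
      hA ⟨k, fun t _ => heq t, (heq k).le, i, i', hi, hi', hii, hk, hk'⟩
  have d12 : k1 ≠ k2 := fun h => key 1 2 k1 (by decide) (by decide) (by decide) h1 (h ▸ h2)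
  have d13 : k1 ≠ k3 := fun h => key 1 3 k1 (by decide) (by decide) (by decide) h1 (h ▸ h3)
  have d23 : k2 ≠ k3 := fun h => key 2 3 k2 (by decide) (by decide) (by decide) h2 (h ▸ h3)
  have hex : ∃ k0 : Fin 4, k0 ≠ k1 ∧ k0 ≠ k2 ∧ k0 ≠ k3 := by
    revert d12 d13 d23; fin_cases k1 <;> fin_cases k2 <;> fin_cases k3 <;> decide
  obtain ⟨k0, e1, e2, e3⟩ := hex
  set g : Fin 4 → Fin 4 := ![k0, k1, k2, k3] with hg
  have g0 : g 0 = k0 := rfl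
  have g1 : g 1 = k1 := rfl
  have g2 : g 2 = k2 := rfl
  have g3 : g 3 = k3 := rfl
  have hinj : Function.Injective g := by
    intro a b hab
    fin_cases a <;> fin_cases b <;>
      simp only [Fin.isValue, g0, g1, g2, g3] at hab <;>
      first
        | rfl
        | exact absurd hab e1 | exact absurd hab e1.symm
        | exact absurd hab e2 | exact absurd hab e2.symm
        | exact absurd hab e3 | exact absurd hab e3.symm
        | exact absurd hab d12 | exact absurd hab d12.symm
        | exact absurd hab d13 | exact absurd hab d13.symm
        | exact absurd hab d23 | exact absurd hab d23.symm
  refine hnoEF ⟨Equiv.ofBijective g (Finite.injective_iff_bijective.mp hinj), ?_⟩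
  intro i t
  simp only [Equiv.ofBijective_apply]
  fin_cases i
  · show pieceVal (v 0) ℓ m r t ≤ pieceVal (v 0) ℓ m r (g 0)
    rw [heq t, heq (g 0)]
  · show pieceVal (v 1) ℓ m r t ≤ pieceVal (v 1) ℓ m r (g 1)
    simpa [hg] using h1 t
  · show pieceVal (v 2) ℓ m r t ≤ pieceVal (v 2) ℓ m r (g 2)
    simpa [hg] using h2 t
  · show pieceVal (v 3) ℓ m r t ≤ pieceVal (v 3) ℓ m r (g 3)
    simpa [hg] using h3 t
end

section
/- Let v₁ and u be hungry valuation functions, and let 0 < α₁ < α₂. For t ∈ {1,2}, suppose (ℓ_t, m_t, r_t) is a division satisfying v₁(0, ℓ_t) = α_t, v₁(m_t, r_t) = α_t, and u(ℓ_t, m_t) = u(r_t, 1). Then r₁ < r₂ (the rightmost cut is strictly increasing in α). -/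
open Set

/-- along the trail where `v₁(0,ℓ) = v₁(m,r) = α` and
`u(ℓ,m) = u(r,1)`, the rightmost cut is strictly increasing in `α`. -/
theorem rightmost_cut_strictMono (v₁ u : ℝ → ℝ → ℝ)
    (hv₁ : IsValuation v₁ ∧ HungryVal v₁)
    (hu : IsValuation u ∧ HungryVal u)
    (α₁ α₂ : ℝ) (hα₁ : 0 < α₁) (h12 : α₁ < α₂)
    (ℓ₁ m₁ r₁ ℓ₂ m₂ r₂ : ℝ) (hd₁ : IsDiv ℓ₁ m₁ r₁) (hd₂ : IsDiv ℓ₂ m₂ r₂)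
    (h1a : v₁ 0 ℓ₁ = α₁) (h1b : v₁ m₁ r₁ = α₁) (h1c : u ℓ₁ m₁ = u r₁ 1)
    (h2a : v₁ 0 ℓ₂ = α₂) (h2b : v₁ m₂ r₂ = α₂) (h2c : u ℓ₂ m₂ = u r₂ 1) :
    r₁ < r₂ := by
  obtain ⟨hℓ₁0, hℓm₁, hmr₁, hr₁1⟩ := hd₁
  obtain ⟨hℓ₂0, hℓm₂, hmr₂, hr₂1⟩ := hd₂
  obtain ⟨hv₁mono, hv₁strict⟩ := hv₁.2
  obtain ⟨humono, hustrict⟩ := hu.2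
  -- ℓ₁ < ℓ₂
  have hℓ : ℓ₁ < ℓ₂ := by
    by_contra h
    push_neg at h
    have := hv₁mono 0 0 ℓ₂ ℓ₁ le_rfl le_rfl hℓ₂0 h
      (hℓm₁.trans (hmr₁.trans hr₁1))
    rw [h2a, h1a] at this
    exact absurd this (not_le.mpr h12)
  by_contra hr
  push_neg at hr
  -- m₂ < m₁
  have hm : m₂ < m₁ := by
    by_contra h
    push_neg at h
    have := hv₁mono m₁ m₂ r₂ r₁ (hℓ₁0.trans hℓm₁) h hmr₂ hr
      hr₁1
    rw [h2b, h1b] at this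
    exact absurd this (not_le.mpr h12)
  have h1 : u ℓ₂ m₂ < u ℓ₁ m₁ :=
    hustrict ℓ₁ ℓ₂ m₂ m₁ hℓ₁0 hℓ.le hℓm₂ hm.le
      (hmr₁.trans hr₁1) (by simp [hℓ.ne', Prod.ext_iff])
  have h2 : u r₁ 1 ≤ u r₂ 1 :=
    humono r₂ r₁ 1 1 ((hℓ₂0.trans (hℓm₂.trans hmr₂))) hr hr₁1 le_rfl le_rfl
  rw [h1c] at h1
  rw [← h2c] at h2
  exact absurd (h1.trans_le h2) (lt_irrefl _)
end
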